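/- arXiv:2004.07298 — 5 statements merged into one kernel-verified Lean document; each statement's English description precedes it below -/
import Mathlib

section
/- Assume μ(τ) ≠ 0 and that τ satisfies exponential large deviation bounds: for each ε > 0 there exist C, δ > 0 with μ(‖τ_N/N − μ(τ)‖ ≥ ε) ≤ C e^{−δN} for all N ≥ 1. Let A₁, A₂ : X → ℝ and B₁, B₂ : Y → ℝ be bounded measurable functions such that for some constants C_f, c_f, C_G, κ > 0: |μ(A₁ · (A₂ ∘ f^N)) − μ(A₁)μ(A₂)| ≤ C_f e^{−c_f N} for all N ≥ 1, and |ν(B₁ · (B₂ ∘ G_t)) − ν(B₁)ν(B₂)| ≤ C_G e^{−κ‖t‖} for all t ∈ ℝ^d. Then, with Φ_i(x, y) = A_i(x)B_i(y), there exist C', δ' > 0 such that |∫ Φ₁ · (Φ₂ ∘ F^N) dζ − (∫ Φ₁ dζ)(∫ Φ₂ dζ)| ≤ C' e^{−δ'N} for all N ≥ 1. -/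
open MeasureTheory Filter Topology

/-- Birkhoff sums `τ_N(x) = ∑_{n<N} τ(f^n x)` of an `ℝ^d`-valued observable. -/
noncomputable def birkhoff {X : Type*} {d : ℕ} (f : X → X)
    (τ : X → EuclideanSpace ℝ (Fin d)) (N : ℕ) (x : X) : EuclideanSpace ℝ (Fin d) :=
  ∑ n ∈ Finset.range N, τ (f^[n] x)

/-- The generalized `T,T⁻¹` (skew product) map `F(x,y) = (f x, G_{τ(x)} y)`. -/
def skew {X Y : Type*} {d : ℕ} (f : X → X) (G : EuclideanSpace ℝ (Fin d) → Y → Y)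
    (τ : X → EuclideanSpace ℝ (Fin d)) : X × Y → X × Y :=
  fun q => (f q.1, G (τ q.1) q.2)

/-!
By Fubini and `F^N(x, y) = (f^N x, G_{τ_N(x)} y)`, the correlation of `Φ₁` and `Φ₂ ∘ F^N` is
`∫ A₁ · (A₂ ∘ f^N) · ρ(τ_N) dμ`, where `ρ(t) = ν(B₁ · B₂ ∘ G_t)`. Writing
`ρ = ν(B₁)ν(B₂) + (ρ − ν(B₁)ν(B₂))`, the first part contributes `ν(B₁)ν(B₂)` times the correlation
of `A₁, A₂` under `f`, which decays by mixing of `f`. The second part is bounded by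
`e^{-κ‖τ_N‖}` by mixing of `G`; since `μ(τ) ≠ 0`, off the large deviation set
`{‖τ_N/N − μ(τ)‖ ≥ ‖μ(τ)‖/2}` we have `‖τ_N‖ ≥ ‖μ(τ)‖N/2`, and that set has exponentially
small measure.
-/

def ExpDecaying (u : ℕ → ℝ) : Prop :=
  ∃ C : ℝ, 0 < C ∧ ∃ δ : ℝ, 0 < δ ∧ ∀ N : ℕ, 1 ≤ N → |u N| ≤ C * Real.exp (-δ * N)

namespace ExpDecaying

variable {u v : ℕ → ℝ}

lemma mono (hv : ExpDecaying v) (h : ∀ N : ℕ, 1 ≤ N → |u N| ≤ |v N|) : ExpDecaying u := by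
  obtain ⟨C, hC, δ, hδ, hvC⟩ := hv
  exact ⟨C, hC, δ, hδ, fun N hN => (h N hN).trans (hvC N hN)⟩

lemma add (hu : ExpDecaying u) (hv : ExpDecaying v) : ExpDecaying fun N => u N + v N := by
  obtain ⟨C₁, hC₁, δ₁, hδ₁, hu⟩ := hu
  obtain ⟨C₂, hC₂, δ₂, hδ₂, hv⟩ := hv
  refine ⟨C₁ + C₂, by positivity, min δ₁ δ₂, lt_min hδ₁ hδ₂, fun N hN => ?_⟩
  calc |u N + v N| ≤ |u N| + |v N| := abs_add_le _ _
    _ ≤ C₁ * Real.exp (-δ₁ * N) + C₂ * Real.exp (-δ₂ * N) := add_le_add (hu N hN) (hv N hN)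
    _ ≤ (C₁ + C₂) * Real.exp (-min δ₁ δ₂ * N) := by
      rw [add_mul]
      gcongr
      exacts [min_le_left _ _, min_le_right _ _]

lemma const_mul (hu : ExpDecaying u) (c : ℝ) : ExpDecaying fun N => c * u N := by
  obtain ⟨C, hC, δ, hδ, hu⟩ := hu
  refine ⟨(|c| + 1) * C, by positivity, δ, hδ, fun N hN => ?_⟩
  rw [abs_mul, mul_assoc]
  exact mul_le_mul (le_add_of_nonneg_right zero_le_one) (hu N hN) (abs_nonneg _) (by positivity)

end ExpDecaying

lemma expDecaying_exp_neg_mul {δ : ℝ} (hδ : 0 < δ) : ExpDecaying fun N => Real.exp (-δ * N) :=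
  ⟨1, one_pos, δ, hδ, fun N _ => by rw [one_mul, abs_of_pos (Real.exp_pos _)]⟩

lemma exists_abs_mul_le {α : Type*} {a b : α → ℝ} (ha : ∃ M, ∀ x, |a x| ≤ M)
    (hb : ∃ M, ∀ x, |b x| ≤ M) : ∃ M, ∀ x, |a x * b x| ≤ M := by
  obtain ⟨Ma, ha⟩ := ha
  obtain ⟨Mb, hb⟩ := hb
  exact ⟨Ma * Mb, fun x => (abs_mul _ _).trans_le
    (mul_le_mul (ha x) (hb x) (abs_nonneg _) ((abs_nonneg _).trans (ha x)))⟩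

lemma Measurable.integrable_of_exists_abs_le {α : Type*} [MeasurableSpace α] {μ : Measure α}
    [IsFiniteMeasure μ] {g : α → ℝ} (hg : Measurable g) (hb : ∃ M, ∀ x, |g x| ≤ M) :
    Integrable g μ :=
  let ⟨M, hM⟩ := hb
  .of_bound hg.aestronglyMeasurable M (.of_forall hM)

lemma abs_integral_le_mul_measureReal_add {α : Type*} [MeasurableSpace α] {μ : Measure α}
    [IsProbabilityMeasure μ] {h : α → ℝ} {S : Set α} (hS : MeasurableSet S) {M η : ℝ}
    (hη : 0 ≤ η) (hM : ∀ x, |h x| ≤ M) (hSc : ∀ x ∉ S, |h x| ≤ η) :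
    |∫ x, h x ∂μ| ≤ M * μ.real S + η := by
  have hbound : ∀ x, |h x| ≤ S.indicator (fun _ => M) x + η := by
    intro x
    by_cases hx : x ∈ S
    · rw [Set.indicator_of_mem hx]
      linarith [hM x]
    · rw [Set.indicator_of_notMem hx, zero_add]
      exact hSc x hx
  have hint : Integrable (fun x => S.indicator (fun _ => M) x + η) μ :=
    ((integrable_const M).indicator hS).add (integrable_const η)
  calc |∫ x, h x ∂μ| ≤ ∫ x, |h x| ∂μ := abs_integral_le_integral_abs
    _ ≤ ∫ x, (S.indicator (fun _ => M) x + η) ∂μ :=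
      integral_mono_of_nonneg (.of_forall fun x => abs_nonneg _) hint (.of_forall hbound)
    _ = M * μ.real S + η := by
      rw [integral_add ((integrable_const M).indicator hS) (integrable_const η),
        integral_indicator_const M hS, integral_const]
      simp [mul_comm]

lemma half_norm_mul_le_norm_of_norm_inv_smul_sub_lt {E : Type*} [NormedAddCommGroup E]
    [NormedSpace ℝ E] {v T : E} {r : ℝ} (hr : 0 < r) (h : ‖r⁻¹ • v - T‖ < ‖T‖ / 2) :
    ‖T‖ / 2 * r ≤ ‖v‖ := by
  have htri : ‖T‖ ≤ ‖r⁻¹ • v‖ + ‖r⁻¹ • v - T‖ := by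
    simpa [norm_sub_rev] using norm_le_norm_add_norm_sub' T (r⁻¹ • v)
  rw [norm_smul, Real.norm_of_nonneg (inv_nonneg.2 hr.le)] at htri
  rw [← le_div_iff₀ hr, div_eq_inv_mul ‖v‖ r]
  linarith

section SkewProduct

variable {X Y : Type*} {d : ℕ} (f : X → X) (G : EuclideanSpace ℝ (Fin d) → Y → Y)
  (τ : X → EuclideanSpace ℝ (Fin d))

lemma birkhoff_succ (N : ℕ) (x : X) :
    birkhoff f τ (N + 1) x = τ (f^[N] x) + birkhoff f τ N x := by
  rw [birkhoff, birkhoff, Finset.sum_range_succ, add_comm]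

lemma skew_iterate (hG0 : G 0 = id) (hGadd : ∀ t s, G (t + s) = G t ∘ G s) (N : ℕ)
    (q : X × Y) : (skew f G τ)^[N] q = (f^[N] q.1, G (birkhoff f τ N q.1) q.2) := by
  induction N with
  | zero => simp [birkhoff, hG0]
  | succ N ih =>
    rw [Function.iterate_succ_apply', ih, Function.iterate_succ_apply', birkhoff_succ, hGadd]
    rfl

lemma measurable_birkhoff [MeasurableSpace X] (hf : Measurable f) (hτ : Measurable τ) (N : ℕ) :
    Measurable (birkhoff f τ N) :=
  Finset.measurable_sum _ fun n _ => hτ.comp (hf.iterate n)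

end SkewProduct

noncomputable def flowCorrelation {T Y : Type*} [MeasurableSpace Y] (ν : Measure Y) (G : T → Y → Y)
    (B₁ B₂ : Y → ℝ) (t : T) : ℝ :=
  ∫ y, B₁ y * B₂ (G t y) ∂ν

section FlowCorrelation

variable {T Y : Type*} [MeasurableSpace Y] {ν : Measure Y} {G : T → Y → Y} {B₁ B₂ : Y → ℝ}

lemma measurable_flowCorrelation [MeasurableSpace T] [SFinite ν]
    (hG : Measurable fun q : T × Y => G q.1 q.2) (hB₁ : Measurable B₁) (hB₂ : Measurable B₂) :
    Measurable (flowCorrelation ν G B₁ B₂) :=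
  ((hB₁.comp measurable_snd).mul (hB₂.comp hG)).stronglyMeasurable.integral_prod_right'.measurable

lemma exists_abs_flowCorrelation_le [IsFiniteMeasure ν] (hB₁ : ∃ M, ∀ y, |B₁ y| ≤ M)
    (hB₂ : ∃ M, ∀ y, |B₂ y| ≤ M) : ∃ M, ∀ t, |flowCorrelation ν G B₁ B₂ t| ≤ M := by
  obtain ⟨M, hM⟩ := exists_abs_mul_le (a := fun q : T × Y => B₁ q.2)
    (b := fun q => B₂ (G q.1 q.2)) (hB₁.imp fun M hM q => hM _) (hB₂.imp fun M hM q => hM _)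
  exact ⟨M * ν.real Set.univ, fun t => norm_integral_le_of_norm_le_const
    (f := fun y => B₁ y * B₂ (G t y)) (.of_forall fun y => hM (t, y))⟩

end FlowCorrelation

lemma integral_prod_mul_comp_skew_iterate {X Y : Type*} [MeasurableSpace X] [MeasurableSpace Y]
    {μ : Measure X} {ν : Measure Y} [IsFiniteMeasure μ] [IsFiniteMeasure ν] {d : ℕ} {f : X → X}
    {G : EuclideanSpace ℝ (Fin d) → Y → Y} {τ : X → EuclideanSpace ℝ (Fin d)}
    (hf : Measurable f) (hG : Measurable fun q : EuclideanSpace ℝ (Fin d) × Y => G q.1 q.2)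
    (hG0 : G 0 = id) (hGadd : ∀ t s, G (t + s) = G t ∘ G s) (hτ : Measurable τ)
    {A₁ A₂ : X → ℝ} {B₁ B₂ : Y → ℝ} (hA₁ : Measurable A₁) (hA₂ : Measurable A₂)
    (hB₁ : Measurable B₁) (hB₂ : Measurable B₂) (hA₁b : ∃ M, ∀ x, |A₁ x| ≤ M)
    (hA₂b : ∃ M, ∀ x, |A₂ x| ≤ M) (hB₁b : ∃ M, ∀ y, |B₁ y| ≤ M) (hB₂b : ∃ M, ∀ y, |B₂ y| ≤ M)
    (N : ℕ) :
    ∫ q, (A₁ q.1 * B₁ q.2) * (A₂ ((skew f G τ)^[N] q).1 * B₂ ((skew f G τ)^[N] q).2) ∂(μ.prod ν)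
      = ∫ x, A₁ x * A₂ (f^[N] x) * flowCorrelation ν G B₁ B₂ (birkhoff f τ N x) ∂μ := by
  have hτN := measurable_birkhoff f τ hf hτ N
  have hint : Integrable (fun q : X × Y =>
      (A₁ q.1 * A₂ (f^[N] q.1)) * (B₁ q.2 * B₂ (G (birkhoff f τ N q.1) q.2))) (μ.prod ν) := by
    refine Measurable.integrable_of_exists_abs_le ?_ (exists_abs_mul_le
      (exists_abs_mul_le (a := fun q : X × Y => A₁ q.1) ?_ ?_)
      (exists_abs_mul_le (a := fun q : X × Y => B₁ q.2) ?_ ?_))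
    have := hf.iterate N
    fun_prop
    exacts [hA₁b.imp fun M hM q => hM q.1, hA₂b.imp fun M hM q => hM _,
      hB₁b.imp fun M hM q => hM q.2, hB₂b.imp fun M hM q => hM _]
  simp_rw [skew_iterate f G τ hG0 hGadd, mul_mul_mul_comm _ (B₁ _)]
  rw [integral_prod _ hint]
  simp_rw [integral_const_mul]
  rfl

lemma correlation_skew_iterate_eq {X Y : Type*} [MeasurableSpace X] [MeasurableSpace Y]
    {μ : Measure X} {ν : Measure Y} [IsFiniteMeasure μ] [IsFiniteMeasure ν] {d : ℕ} {f : X → X}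
    {G : EuclideanSpace ℝ (Fin d) → Y → Y} {τ : X → EuclideanSpace ℝ (Fin d)}
    (hf : Measurable f) (hG : Measurable fun q : EuclideanSpace ℝ (Fin d) × Y => G q.1 q.2)
    (hG0 : G 0 = id) (hGadd : ∀ t s, G (t + s) = G t ∘ G s) (hτ : Measurable τ)
    {A₁ A₂ : X → ℝ} {B₁ B₂ : Y → ℝ} (hA₁ : Measurable A₁) (hA₂ : Measurable A₂)
    (hB₁ : Measurable B₁) (hB₂ : Measurable B₂) (hA₁b : ∃ M, ∀ x, |A₁ x| ≤ M)
    (hA₂b : ∃ M, ∀ x, |A₂ x| ≤ M) (hB₁b : ∃ M, ∀ y, |B₁ y| ≤ M) (hB₂b : ∃ M, ∀ y, |B₂ y| ≤ M)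
    (N : ℕ) :
    (∫ q, (A₁ q.1 * B₁ q.2) * (A₂ ((skew f G τ)^[N] q).1 * B₂ ((skew f G τ)^[N] q).2)
        ∂(μ.prod ν)) - (∫ q, A₁ q.1 * B₁ q.2 ∂(μ.prod ν)) * ∫ q, A₂ q.1 * B₂ q.2 ∂(μ.prod ν)
      = (∫ x, A₁ x * A₂ (f^[N] x) * (flowCorrelation ν G B₁ B₂ (birkhoff f τ N x)
            - (∫ y, B₁ y ∂ν) * ∫ y, B₂ y ∂ν) ∂μ)
        + (∫ y, B₁ y ∂ν) * (∫ y, B₂ y ∂ν) *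
          ((∫ x, A₁ x * A₂ (f^[N] x) ∂μ) - (∫ x, A₁ x ∂μ) * ∫ x, A₂ x ∂μ) := by
  have hτN := measurable_birkhoff f τ hf hτ N
  have hρ := measurable_flowCorrelation (ν := ν) hG hB₁ hB₂
  have hfN := hf.iterate N
  have hAA : ∃ M, ∀ x, |A₁ x * A₂ (f^[N] x)| ≤ M :=
    exists_abs_mul_le hA₁b (hA₂b.imp fun M hM x => hM _)
  have hAAρ : Integrable
      (fun x => A₁ x * A₂ (f^[N] x) * flowCorrelation ν G B₁ B₂ (birkhoff f τ N x)) μ :=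
    Measurable.integrable_of_exists_abs_le (by fun_prop) (exists_abs_mul_le hAA
      ((exists_abs_flowCorrelation_le hB₁b hB₂b).imp fun M hM x => hM _))
  have hAAint : Integrable (fun x => A₁ x * A₂ (f^[N] x)) μ :=
    Measurable.integrable_of_exists_abs_le (by fun_prop) hAA
  rw [integral_prod_mul_comp_skew_iterate hf hG hG0 hGadd hτ hA₁ hA₂ hB₁ hB₂
    hA₁b hA₂b hB₁b hB₂b, integral_prod_mul A₁ B₁, integral_prod_mul A₂ B₂]
  simp_rw [mul_sub]
  rw [integral_sub hAAρ (hAAint.mul_const _), integral_mul_const]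
  ring

theorem expDecaying_integral_mul_comp_birkhoff {X : Type*} [MeasurableSpace X] {μ : Measure X}
    [IsProbabilityMeasure μ] {d : ℕ} {f : X → X} {τ : X → EuclideanSpace ℝ (Fin d)}
    (hf : Measurable f) (hτ : Measurable τ) (hdrift : (∫ x, τ x ∂μ) ≠ 0)
    (hLD : ∀ ε : ℝ, 0 < ε → ∃ C : ℝ, 0 < C ∧ ∃ δ : ℝ, 0 < δ ∧ ∀ N : ℕ, 1 ≤ N →
      (μ {x | ε ≤ ‖(N : ℝ)⁻¹ • birkhoff f τ N x - ∫ x, τ x ∂μ‖}).toReal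
        ≤ C * Real.exp (-δ * N))
    {g : ℕ → X → ℝ} {K : ℝ} (hg : ∀ N x, |g N x| ≤ K)
    {ρ : EuclideanSpace ℝ (Fin d) → ℝ} {C κ : ℝ} (hκ : 0 < κ)
    (hρ : ∀ t, |ρ t| ≤ C * Real.exp (-κ * ‖t‖)) :
    ExpDecaying fun N => ∫ x, g N x * ρ (birkhoff f τ N x) ∂μ := by
  set T := ∫ x, τ x ∂μ
  have hε : 0 < ‖T‖ / 2 := half_pos (norm_pos_iff.2 hdrift)
  obtain ⟨CLD, hCLD, δ, hδ, hLDε⟩ := hLD _ hε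
  set S : ℕ → Set X := fun N => {x | ‖T‖ / 2 ≤ ‖(N : ℝ)⁻¹ • birkhoff f τ N x - T‖}
  have hS : ∀ N, MeasurableSet (S N) := fun N => by
    have := measurable_birkhoff f τ hf hτ N
    exact measurableSet_le measurable_const (by fun_prop)
  have hLDdecay : ExpDecaying fun N => μ.real (S N) :=
    ⟨CLD, hCLD, δ, hδ, fun N hN => (abs_of_nonneg measureReal_nonneg).trans_le (hLDε N hN)⟩
  obtain ⟨x₀⟩ := nonempty_of_isProbabilityMeasure μ
  have hK : 0 ≤ K := (abs_nonneg _).trans (hg 0 x₀)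
  have hC : 0 ≤ C := (mul_nonneg_iff_of_pos_right (Real.exp_pos _)).1 ((abs_nonneg _).trans (hρ 0))
  refine ((hLDdecay.const_mul (K * C)).add
    ((expDecaying_exp_neg_mul (mul_pos hκ hε)).const_mul (K * C))).mono fun N hN => ?_
  have hpt : ∀ x, |g N x * ρ (birkhoff f τ N x)| ≤ K * C * Real.exp (-κ * ‖birkhoff f τ N x‖) :=
    fun x => by
      rw [abs_mul, mul_assoc]
      exact mul_le_mul (hg N x) (hρ _) (abs_nonneg _) hK
  refine (abs_integral_le_mul_measureReal_add (hS N) (by positivity) (fun x => (hpt x).trans ?_)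
    (fun x hx => (hpt x).trans ?_)).trans (le_abs_self _)
  · refine mul_le_of_le_one_right (by positivity) (Real.exp_le_one_iff.2 ?_)
    have := norm_nonneg (birkhoff f τ N x)
    nlinarith
  · have hN' : (0 : ℝ) < N := by exact_mod_cast hN
    have := half_norm_mul_le_norm_of_norm_inv_smul_sub_lt hN' (not_le.1 hx)
    exact mul_le_mul_of_nonneg_left (Real.exp_le_exp.2 (by nlinarith)) (by positivity)

theorem stmt_1_general
    {X Y : Type*} [MeasurableSpace X] [MeasurableSpace Y]
    (μ : Measure X) (ν : Measure Y)
    [IsProbabilityMeasure μ] [IsProbabilityMeasure ν]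
    {d : ℕ}
    (f : X → X) (hf : MeasurePreserving f μ μ)
    (G : EuclideanSpace ℝ (Fin d) → Y → Y)
    (hGmeas : Measurable fun q : EuclideanSpace ℝ (Fin d) × Y => G q.1 q.2)
    (hG0 : G 0 = id)
    (hGadd : ∀ t s, G (t + s) = G t ∘ G s)
    (τ : X → EuclideanSpace ℝ (Fin d)) (hτmeas : Measurable τ)
    (hdrift : (∫ x, τ x ∂μ) ≠ 0)
    -- exponential large deviation bounds for τ
    (hLD : ∀ ε : ℝ, 0 < ε → ∃ C : ℝ, 0 < C ∧ ∃ δ : ℝ, 0 < δ ∧ ∀ N : ℕ, 1 ≤ N →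
      (μ {x | ε ≤ ‖(N : ℝ)⁻¹ • birkhoff f τ N x - ∫ x, τ x ∂μ‖}).toReal
        ≤ C * Real.exp (-δ * N))
    (A₁ A₂ : X → ℝ) (B₁ B₂ : Y → ℝ)
    (hA₁ : Measurable A₁) (hA₂ : Measurable A₂)
    (hB₁ : Measurable B₁) (hB₂ : Measurable B₂)
    (hA₁b : ∃ M, ∀ x, |A₁ x| ≤ M) (hA₂b : ∃ M, ∀ x, |A₂ x| ≤ M)
    (hB₁b : ∃ M, ∀ y, |B₁ y| ≤ M) (hB₂b : ∃ M, ∀ y, |B₂ y| ≤ M)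
    (Cf cf CG κ : ℝ) (hCf : 0 < Cf) (hcf : 0 < cf) (hκ : 0 < κ)
    -- exponential mixing of f for A₁, A₂
    (hfmix : ∀ N : ℕ, 1 ≤ N →
      |(∫ x, A₁ x * A₂ (f^[N] x) ∂μ) - (∫ x, A₁ x ∂μ) * ∫ x, A₂ x ∂μ|
        ≤ Cf * Real.exp (-cf * N))
    -- exponential mixing of G for B₁, B₂
    (hGmix : ∀ t : EuclideanSpace ℝ (Fin d),
      |(∫ y, B₁ y * B₂ (G t y) ∂ν) - (∫ y, B₁ y ∂ν) * ∫ y, B₂ y ∂ν|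
        ≤ CG * Real.exp (-κ * ‖t‖)) :
    ∃ C' : ℝ, 0 < C' ∧ ∃ δ' : ℝ, 0 < δ' ∧ ∀ N : ℕ, 1 ≤ N →
      |(∫ q, (A₁ q.1 * B₁ q.2) * (A₂ ((skew f G τ)^[N] q).1 * B₂ ((skew f G τ)^[N] q).2)
          ∂(μ.prod ν))
        - (∫ q, A₁ q.1 * B₁ q.2 ∂(μ.prod ν)) * ∫ q, A₂ q.1 * B₂ q.2 ∂(μ.prod ν)|
        ≤ C' * Real.exp (-δ' * N) := by
  obtain ⟨K, hK⟩ := exists_abs_mul_le (a := fun p : ℕ × X => A₁ p.2)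
    (b := fun p => A₂ (f^[p.1] p.2)) (hA₁b.imp fun M hM p => hM _) (hA₂b.imp fun M hM p => hM _)
  have hI := expDecaying_integral_mul_comp_birkhoff hf.measurable hτmeas hdrift hLD
    (fun N x => hK (N, x)) hκ hGmix
  have hfcorr : ExpDecaying fun N =>
      (∫ x, A₁ x * A₂ (f^[N] x) ∂μ) - (∫ x, A₁ x ∂μ) * ∫ x, A₂ x ∂μ :=
    ⟨Cf, hCf, cf, hcf, hfmix⟩
  have hcorr := correlation_skew_iterate_eq (μ := μ) (ν := ν) hf.measurable hGmeas hG0 hGadd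
    hτmeas hA₁ hA₂ hB₁ hB₂ hA₁b hA₂b hB₁b hB₂b
  exact (hI.add (hfcorr.const_mul ((∫ y, B₁ y ∂ν) * ∫ y, B₂ y ∂ν))).mono fun N _ =>
    (congrArg abs (hcorr N)).le

/-- Theorem 4.1(a) of the paper: if `μ(τ) ≠ 0`, `τ` satisfies exponential large deviation
bounds, and `f` and `G` are exponentially mixing (for the given observables), then the
correlations of the product observables `Φᵢ(x,y) = Aᵢ(x)Bᵢ(y)` under `F` decay
exponentially. -/
theorem stmt_1
    {X Y : Type*} [MeasurableSpace X] [MeasurableSpace Y]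
    (μ : Measure X) (ν : Measure Y)
    [IsProbabilityMeasure μ] [IsProbabilityMeasure ν]
    {d : ℕ}
    (f : X → X) (hf : MeasurePreserving f μ μ)
    (G : EuclideanSpace ℝ (Fin d) → Y → Y)
    (hGmeas : Measurable fun q : EuclideanSpace ℝ (Fin d) × Y => G q.1 q.2)
    (hG0 : G 0 = id)
    (hGadd : ∀ t s, G (t + s) = G t ∘ G s)
    (hGpres : ∀ t, MeasurePreserving (G t) ν ν)
    (τ : X → EuclideanSpace ℝ (Fin d)) (hτmeas : Measurable τ)
    (hτbdd : ∃ M, ∀ x, ‖τ x‖ ≤ M)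
    (hdrift : (∫ x, τ x ∂μ) ≠ 0)
    -- exponential large deviation bounds for τ
    (hLD : ∀ ε : ℝ, 0 < ε → ∃ C : ℝ, 0 < C ∧ ∃ δ : ℝ, 0 < δ ∧ ∀ N : ℕ, 1 ≤ N →
      (μ {x | ε ≤ ‖(N : ℝ)⁻¹ • birkhoff f τ N x - ∫ x, τ x ∂μ‖}).toReal
        ≤ C * Real.exp (-δ * N))
    (A₁ A₂ : X → ℝ) (B₁ B₂ : Y → ℝ)
    (hA₁ : Measurable A₁) (hA₂ : Measurable A₂)
    (hB₁ : Measurable B₁) (hB₂ : Measurable B₂)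
    (hA₁b : ∃ M, ∀ x, |A₁ x| ≤ M) (hA₂b : ∃ M, ∀ x, |A₂ x| ≤ M)
    (hB₁b : ∃ M, ∀ y, |B₁ y| ≤ M) (hB₂b : ∃ M, ∀ y, |B₂ y| ≤ M)
    (Cf cf CG κ : ℝ) (hCf : 0 < Cf) (hcf : 0 < cf) (hCG : 0 < CG) (hκ : 0 < κ)
    -- exponential mixing of f for A₁, A₂
    (hfmix : ∀ N : ℕ, 1 ≤ N →
      |(∫ x, A₁ x * A₂ (f^[N] x) ∂μ) - (∫ x, A₁ x ∂μ) * ∫ x, A₂ x ∂μ|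
        ≤ Cf * Real.exp (-cf * N))
    -- exponential mixing of G for B₁, B₂
    (hGmix : ∀ t : EuclideanSpace ℝ (Fin d),
      |(∫ y, B₁ y * B₂ (G t y) ∂ν) - (∫ y, B₁ y ∂ν) * ∫ y, B₂ y ∂ν|
        ≤ CG * Real.exp (-κ * ‖t‖)) :
    ∃ C' : ℝ, 0 < C' ∧ ∃ δ' : ℝ, 0 < δ' ∧ ∀ N : ℕ, 1 ≤ N →
      |(∫ q, (A₁ q.1 * B₁ q.2) * (A₂ ((skew f G τ)^[N] q).1 * B₂ ((skew f G τ)^[N] q).2)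
          ∂(μ.prod ν))
        - (∫ q, A₁ q.1 * B₁ q.2 ∂(μ.prod ν)) * ∫ q, A₂ q.1 * B₂ q.2 ∂(μ.prod ν)|
        ≤ C' * Real.exp (-δ' * N) :=
  stmt_1_general μ ν f hf G hGmeas hG0 hGadd τ hτmeas hdrift hLD A₁ A₂ B₁ B₂ hA₁ hA₂ hB₁ hB₂ hA₁b
    hA₂b hB₁b hB₂b Cf cf CG κ hCf hcf hκ hfmix hGmix
end

section
/- Let d ≥ 1 be an integer and (L_n)_{n≥0} positive reals with L_0 = 1 and Σ_{n≥1} L_n^{−d} < ∞. Let m ≥ 2 and let Q be a social partition of {1, …, m} with r atoms. For integers 0 ≤ n₁ ≤ … ≤ n_m set κ_Q⁺(n₁, …, n_m) = ∏_{j forward fixed in Q} L_{n_j − n_{j−1}} (with n_0 = 0). Then: (a) there is C such that for every N ≥ 1, Σ_{0 ≤ n₁ ≤ … ≤ n_m ≤ N} κ_Q⁺(n₁, …, n_m)^{−d} ≤ C N^r; (b) if Q is not a pairing (i.e., some atom of Q has more than two elements), then this sum is at most C N^{(m−1)/2}. -/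
/-!
Pass from a monotone tuple `0 ≤ n₁ ≤ … ≤ n_m ≤ N` to its gaps `g_j = n_j - n_{j-1} ∈ [0, N]`.
This map is injective, and in the gap variables `κ_Q⁺(n)^{-d}` becomes a product of one-variable
factors, so the sum is at most a product of one-dimensional sums. A forward fixed index
contributes `∑_g L_g^{-d} = O(1)`, every other index at most `N + 1 ≤ 2N`; the indices that are
not forward fixed are the minima of the atoms, so there are `r` of them. If some atom has at least
three elements, then `m = ∑_A |A| > 2r`, so `r ≤ (m - 1)/2`.
-/

open Filter
open scoped Classical

noncomputable section

/-- `Q` is a partition of `Fin m` (as a finite set of finite sets). -/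
def IsPartitionFin {m : ℕ} (Q : Finset (Finset (Fin m))) : Prop :=
  (∀ A ∈ Q, A.Nonempty) ∧ ∀ j : Fin m, ∃! A, A ∈ Q ∧ j ∈ A

/-- A partition is social if every atom has at least two elements. -/
def SocialFin {m : ℕ} (Q : Finset (Finset (Fin m))) : Prop :=
  IsPartitionFin Q ∧ ∀ A ∈ Q, 2 ≤ A.card

/-- `j` is forward fixed in `Q` if it is not the smallest index of its atom. -/
def ForwardFixedFin {m : ℕ} (Q : Finset (Finset (Fin m))) (j : Fin m) : Prop :=
  ∃ A ∈ Q, j ∈ A ∧ ∃ i ∈ A, i < j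

/-- The value `n_{j-1}`, with the convention `n_0 = 0` before the first index. -/
def prevVal {m : ℕ} (n : Fin m → ℕ) (j : Fin m) : ℕ :=
  if j.val = 0 then 0
  else n ⟨j.val - 1, lt_of_le_of_lt (Nat.sub_le _ _) j.isLt⟩

/-- `κ_Q⁺(n₁,…,n_m) = ∏_{j forward fixed in Q} L_{n_j − n_{j−1}}`. -/
def kappaPlusFin {m : ℕ} (L : ℕ → ℝ) (Q : Finset (Finset (Fin m))) (n : Fin m → ℕ) : ℝ :=
  ∏ j : Fin m, if ForwardFixedFin Q j then L (n j - prevVal n j) else 1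

open Finset

namespace IsPartitionFin

variable {m : ℕ} {Q : Finset (Finset (Fin m))}

theorem eq_of_mem (hQ : IsPartitionFin Q) {A B : Finset (Fin m)} {j : Fin m}
    (hA : A ∈ Q) (hjA : j ∈ A) (hB : B ∈ Q) (hjB : j ∈ B) : A = B :=
  (hQ.2 j).unique ⟨hA, hjA⟩ ⟨hB, hjB⟩

theorem not_forwardFixedFin_iff (hQ : IsPartitionFin Q) {A : Finset (Fin m)} (hA : A ∈ Q)
    {j : Fin m} (hj : j ∈ A) : ¬ ForwardFixedFin Q j ↔ j = A.min' (hQ.1 A hA) := by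
  constructor
  · intro hnot
    refine le_antisymm (not_lt.1 fun hlt => hnot ?_) (A.min'_le j hj)
    exact ⟨A, hA, hj, _, A.min'_mem _, hlt⟩
  · rintro rfl ⟨B, hB, hjB, i, hiB, hi⟩
    obtain rfl := hQ.eq_of_mem hB hjB hA (A.min'_mem _)
    exact (B.min'_le i hiB).not_gt hi

theorem card_filter_not_forwardFixedFin (hQ : IsPartitionFin Q) :
    #{j | ¬ ForwardFixedFin Q j} = #Q := by
  symm
  refine card_bij (fun A hA => A.min' (hQ.1 A hA)) (fun A hA => ?_) (fun A hA B hB h => ?_)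
    (fun j hj => ?_)
  · exact mem_filter.2 ⟨mem_univ _, (hQ.not_forwardFixedFin_iff hA (A.min'_mem _)).2 rfl⟩
  · exact hQ.eq_of_mem hA (A.min'_mem _) hB (h ▸ B.min'_mem _)
  · obtain ⟨A, ⟨hA, hjA⟩, -⟩ := hQ.2 j
    exact ⟨A, hA, ((hQ.not_forwardFixedFin_iff hA hjA).1 (mem_filter.1 hj).2).symm⟩

theorem sum_card (hQ : IsPartitionFin Q) : ∑ A ∈ Q, #A = m := by
  have hdisj : (Q : Set (Finset (Fin m))).PairwiseDisjoint id := fun A hA B hB hAB =>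
    disjoint_left.2 fun j hjA hjB => hAB (hQ.eq_of_mem hA hjA hB hjB)
  have hcover : Q.biUnion id = univ := eq_univ_of_forall fun j => by
    obtain ⟨A, ⟨hA, hjA⟩, -⟩ := hQ.2 j
    exact mem_biUnion.2 ⟨A, hA, hjA⟩
  simpa [hcover] using (card_biUnion hdisj).symm

end IsPartitionFin

theorem SocialFin.two_mul_card_lt {m : ℕ} {Q : Finset (Finset (Fin m))} (hQ : SocialFin Q)
    (hpair : ¬ ∀ A ∈ Q, #A = 2) : 2 * #Q < m := by
  obtain ⟨A₀, hA₀, hA₀card⟩ : ∃ A ∈ Q, #A ≠ 2 := by simpa using hpair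
  calc 2 * #Q = ∑ _A ∈ Q, 2 := by rw [sum_const, smul_eq_mul, mul_comm]
    _ < ∑ A ∈ Q, #A :=
      sum_lt_sum (fun A hA => hQ.2 A hA) ⟨A₀, hA₀, lt_of_le_of_ne (hQ.2 A₀ hA₀) hA₀card.symm⟩
    _ = m := hQ.1.sum_card

section Gaps

variable {m : ℕ}

def monotoneTuples (m N : ℕ) : Finset (Fin m → ℕ) :=
  (Fintype.piFinset fun _ : Fin m => range (N + 1)).filter
    (fun n => ∀ i j : Fin m, i ≤ j → n i ≤ n j)

theorem mem_monotoneTuples {N : ℕ} {n : Fin m → ℕ} :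
    n ∈ monotoneTuples m N ↔ (∀ j, n j ≤ N) ∧ Monotone n := by
  simp only [monotoneTuples, mem_filter, Fintype.mem_piFinset, mem_range, Nat.lt_succ_iff]
  exact Iff.rfl

def gaps (n : Fin m → ℕ) (j : Fin m) : ℕ := n j - prevVal n j

theorem prevVal_succ (n : Fin m → ℕ) {k : ℕ} (hk : k + 1 < m) :
    prevVal n ⟨k + 1, hk⟩ = n ⟨k, (Nat.lt_succ_self k).trans hk⟩ := by
  simp [prevVal]

theorem prevVal_le_of_monotone {n : Fin m → ℕ} (hn : Monotone n) (j : Fin m) :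
    prevVal n j ≤ n j := by
  unfold prevVal
  split_ifs
  · exact Nat.zero_le _
  · exact hn (Fin.le_def.2 (Nat.sub_le _ _))

theorem gaps_injOn : Set.InjOn (gaps (m := m)) {n | Monotone n} := by
  intro x hx y hy hxy
  suffices ∀ k (hk : k < m), x ⟨k, hk⟩ = y ⟨k, hk⟩ from funext fun j => this j j.2
  intro k
  induction k with
  | zero => intro hk; simpa [gaps, prevVal] using congrFun hxy ⟨0, hk⟩
  | succ k ih =>
    intro hk
    have hgap := congrFun hxy ⟨k + 1, hk⟩
    have hxle := prevVal_le_of_monotone hx ⟨k + 1, hk⟩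
    have hyle := prevVal_le_of_monotone hy ⟨k + 1, hk⟩
    simp only [gaps, prevVal_succ _ hk, ih] at hgap hxle hyle
    omega

theorem sum_monotoneTuples_prod_gaps_le (f : Fin m → ℕ → ℝ) (N : ℕ) :
    ∑ n ∈ monotoneTuples m N, ∏ j, f j (gaps n j) ≤ ∏ j, ∑ g ∈ range (N + 1), |f j g| := by
  have hinj : Set.InjOn gaps (monotoneTuples m N : Set (Fin m → ℕ)) := fun x hx y hy =>
    gaps_injOn (mem_monotoneTuples.1 hx).2 (mem_monotoneTuples.1 hy).2
  have himage : (monotoneTuples m N).image gaps ⊆ Fintype.piFinset fun _ => range (N + 1) := by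
    simp only [subset_iff, mem_image, Fintype.mem_piFinset, mem_range, Nat.lt_succ_iff]
    rintro _ ⟨n, hn, rfl⟩ j
    exact (Nat.sub_le _ _).trans ((mem_monotoneTuples.1 hn).1 j)
  calc ∑ n ∈ monotoneTuples m N, ∏ j, f j (gaps n j)
      ≤ ∑ n ∈ monotoneTuples m N, ∏ j, |f j (gaps n j)| :=
        sum_le_sum fun n _ => (le_abs_self _).trans_eq (abs_prod _ _)
    _ = ∑ g ∈ (monotoneTuples m N).image gaps, ∏ j, |f j (g j)| :=
        (sum_image (f := fun g => ∏ j, |f j (g j)|) hinj).symm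
    _ ≤ ∑ g ∈ Fintype.piFinset fun _ => range (N + 1), ∏ j, |f j (g j)| :=
        sum_le_sum_of_subset_of_nonneg himage fun g _ _ => prod_nonneg fun j _ => abs_nonneg _
    _ = ∏ j, ∑ g ∈ range (N + 1), |f j g| := by rw [prod_univ_sum]

end Gaps

theorem one_div_kappaPlusFin_pow {m : ℕ} (d : ℕ) (L : ℕ → ℝ) (Q : Finset (Finset (Fin m)))
    (n : Fin m → ℕ) :
    1 / kappaPlusFin L Q n ^ d = ∏ j, if ForwardFixedFin Q j then 1 / L (gaps n j) ^ d else 1 := by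
  rw [kappaPlusFin, ← prod_pow, one_div, ← prod_inv_distrib]
  refine prod_congr rfl fun j _ => ?_
  split_ifs <;> simp [gaps]

theorem sum_range_abs_one_div_pow_le {d : ℕ} {L : ℕ → ℝ}
    (hL : Summable fun n : ℕ => 1 / L (n + 1) ^ d) (N : ℕ) :
    ∑ g ∈ range (N + 1), |1 / L g ^ d| ≤ |1 / L 0 ^ d| + ∑' n, |1 / L (n + 1) ^ d| := by
  rw [sum_range_succ', add_comm]
  gcongr
  exact hL.abs.sum_le_tsum _ fun n _ => abs_nonneg _

theorem exists_sum_one_div_kappaPlusFin_pow_le {m : ℕ} {d : ℕ} {L : ℕ → ℝ}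
    (hL : Summable fun n : ℕ => 1 / L (n + 1) ^ d) {Q : Finset (Finset (Fin m))}
    (hQ : IsPartitionFin Q) :
    ∃ C, 0 ≤ C ∧ ∀ N : ℕ, 1 ≤ N →
      ∑ n ∈ monotoneTuples m N, 1 / kappaPlusFin L Q n ^ d ≤ C * (N : ℝ) ^ #Q := by
  set S := |1 / L 0 ^ d| + ∑' n, |1 / L (n + 1) ^ d|
  have hS : 0 ≤ S := add_nonneg (abs_nonneg _) (tsum_nonneg fun n => abs_nonneg _)
  refine ⟨S ^ #{j | ForwardFixedFin Q j} * 2 ^ #Q, by positivity, fun N hN => ?_⟩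
  have hfactor : ∀ j, ∑ g ∈ range (N + 1), |if ForwardFixedFin Q j then 1 / L g ^ d else 1|
      ≤ if ForwardFixedFin Q j then S else 2 * (N : ℝ) := fun j => by
    split_ifs
    · exact sum_range_abs_one_div_pow_le hL N
    · have : (1 : ℝ) ≤ N := by exact_mod_cast hN
      simp only [abs_one, sum_const, card_range, nsmul_one, Nat.cast_add, Nat.cast_one]
      linarith
  calc ∑ n ∈ monotoneTuples m N, 1 / kappaPlusFin L Q n ^ d
      = ∑ n ∈ monotoneTuples m N,
          ∏ j, if ForwardFixedFin Q j then 1 / L (gaps n j) ^ d else 1 :=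
        sum_congr rfl fun n _ => one_div_kappaPlusFin_pow d L Q n
    _ ≤ ∏ j, ∑ g ∈ range (N + 1), |if ForwardFixedFin Q j then 1 / L g ^ d else 1| :=
        sum_monotoneTuples_prod_gaps_le
          (fun j g => if ForwardFixedFin Q j then 1 / L g ^ d else 1) N
    _ ≤ ∏ j, if ForwardFixedFin Q j then S else 2 * (N : ℝ) :=
        prod_le_prod (fun j _ => sum_nonneg fun g _ => abs_nonneg _) fun j _ => hfactor j
    _ = S ^ #{j | ForwardFixedFin Q j} * 2 ^ #Q * (N : ℝ) ^ #Q := by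
        rw [prod_ite, prod_const, prod_const, hQ.card_filter_not_forwardFixedFin, mul_pow,
          mul_assoc]

theorem stmt_11_general
    (d : ℕ) (L : ℕ → ℝ)
    (hLsum : Summable fun n : ℕ => 1 / L (n + 1) ^ d)
    (m : ℕ)
    (Q : Finset (Finset (Fin m))) (hQ : SocialFin Q) :
    (∃ C : ℝ, ∀ N : ℕ, 1 ≤ N →
      ∑ n ∈ (Fintype.piFinset fun _ : Fin m => Finset.range (N + 1)).filter
          (fun n => ∀ i j : Fin m, i ≤ j → n i ≤ n j),
        1 / kappaPlusFin L Q n ^ d ≤ C * (N : ℝ) ^ (Q.card)) ∧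
    ((¬ ∀ A ∈ Q, A.card = 2) → ∃ C : ℝ, ∀ N : ℕ, 1 ≤ N →
      ∑ n ∈ (Fintype.piFinset fun _ : Fin m => Finset.range (N + 1)).filter
          (fun n => ∀ i j : Fin m, i ≤ j → n i ≤ n j),
        1 / kappaPlusFin L Q n ^ d ≤ C * (N : ℝ) ^ (((m : ℝ) - 1) / 2)) := by
  obtain ⟨C, hC, hbound⟩ := exists_sum_one_div_kappaPlusFin_pow_le hLsum hQ.1
  refine ⟨⟨C, hbound⟩, fun hpair => ⟨C, fun N hN => (hbound N hN).trans ?_⟩⟩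
  have hcard : (#Q : ℝ) ≤ ((m : ℝ) - 1) / 2 := by
    have : ((2 * #Q + 1 : ℕ) : ℝ) ≤ m := by exact_mod_cast hQ.two_mul_card_lt hpair
    push_cast at this
    linarith
  rw [← Real.rpow_natCast]
  gcongr
  exact_mod_cast hN

/-- Lemma 5.3 of the paper: (a) the sum of `κ_Q⁺^{-d}` over monotone tuples
`0 ≤ n₁ ≤ … ≤ n_m ≤ N` is `O(N^r)` where `r` is the number of atoms of the social
partition `Q`; (b) if `Q` is not a pairing, the sum is `O(N^{(m-1)/2})`. -/
theorem stmt_11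
    (d : ℕ) (hd : 1 ≤ d) (L : ℕ → ℝ) (hLpos : ∀ n, 0 < L n) (hL0 : L 0 = 1)
    (hLsum : Summable fun n : ℕ => 1 / L (n + 1) ^ d)
    (m : ℕ) (hm : 2 ≤ m)
    (Q : Finset (Finset (Fin m))) (hQ : SocialFin Q) :
    (∃ C : ℝ, ∀ N : ℕ, 1 ≤ N →
      ∑ n ∈ (Fintype.piFinset fun _ : Fin m => Finset.range (N + 1)).filter
          (fun n => ∀ i j : Fin m, i ≤ j → n i ≤ n j),
        1 / kappaPlusFin L Q n ^ d ≤ C * (N : ℝ) ^ (Q.card)) ∧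
    ((¬ ∀ A ∈ Q, A.card = 2) → ∃ C : ℝ, ∀ N : ℕ, 1 ≤ N →
      ∑ n ∈ (Fintype.piFinset fun _ : Fin m => Finset.range (N + 1)).filter
          (fun n => ∀ i j : Fin m, i ≤ j → n i ≤ n j),
        1 / kappaPlusFin L Q n ^ d ≤ C * (N : ℝ) ^ (((m : ℝ) - 1) / 2)) :=
  stmt_11_general d L hLsum m Q hQ

end
end

section
/- Let (X_n)_{n≥1} be a stationary sequence of square-integrable real random variables on a probability space (Ω, P): for all j, k ≥ 1, the joint law of (X_{1+k}, …, X_{j+k}) equals the joint law of (X₁, …, X_j). Let S_n = Σ_{k=1}^n X_k, and suppose there are constants C > 0 and ρ > 0 with E(S_n²) ≤ C n^{2ρ} for all n ≥ 1. Then for every ε > 0, S_n / n^{max(ρ, 1/2) + ε} → 0 almost surely as n → ∞. -/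
open MeasureTheory Filter Topology

/-!
Stationarity gives `E (S_{a+n} - S_a)² = E S_n² ≤ C n^{2ρ}`. Put `β = max(ρ, 1/2) + ε/2`. For the
dyadic block `(i 2^j, (i+1) 2^j]`, Chebyshev bounds the probability that its increment exceeds
`((i+1) 2^j)^β` by `C 2^{-2j(β-ρ)} (i+1)^{-2β}`, which is summable over `(j, i)`, so by
Borel–Cantelli almost surely only finitely many blocks are exceptional and
`|block| ≤ K ((i+1) 2^j)^β` for all blocks. Since `[0, n]` is a union of at most `log₂ n + 1`
dyadic blocks ending at most at `n`, this gives `|S_n| ≤ K (log₂ n + 1) n^β = o(n^{β+ε/2})`.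
-/

open ProbabilityTheory Asymptotics Finset

lemma abs_sub_le_mul_of_dyadic_increments (s g : ℕ → ℝ) (hg : Monotone g)
    (hg0 : ∀ n, 0 ≤ g n)
    (hinc : ∀ j i, |s (i * 2 ^ j + 2 ^ j) - s (i * 2 ^ j)| ≤ g (i * 2 ^ j + 2 ^ j))
    (J : ℕ) : ∀ a ℓ, 2 ^ J ∣ a → ℓ < 2 ^ J → |s (a + ℓ) - s a| ≤ J * g (a + ℓ) := by
  induction J with
  | zero =>
    intro a ℓ _ hℓ
    obtain rfl : ℓ = 0 := by simpa using hℓ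
    simp
  | succ J ih =>
    rintro _ ℓ ⟨i, rfl⟩ hℓ
    set a := 2 ^ (J + 1) * i
    have ha : 2 ^ J ∣ a := (pow_dvd_pow 2 J.le_succ).mul_right i
    by_cases hshort : ℓ < 2 ^ J
    · calc _ ≤ J * g (a + ℓ) := ih a ℓ ha hshort
        _ ≤ (J + 1 : ℕ) * g (a + ℓ) := by gcongr; exacts [hg0 _, by simp]
    · rw [pow_succ] at hℓ
      have hfirst : |s (a + 2 ^ J) - s a| ≤ g (a + ℓ) := by
        have h := hinc J (2 * i)
        rw [show 2 * i * 2 ^ J = a by ring] at h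
        exact h.trans (hg (by omega))
      have hrest := ih (a + 2 ^ J) (ℓ - 2 ^ J) (dvd_add ha dvd_rfl) (by omega)
      rw [show a + 2 ^ J + (ℓ - 2 ^ J) = a + ℓ by omega] at hrest
      calc |s (a + ℓ) - s a| ≤ |s (a + ℓ) - s (a + 2 ^ J)| + |s (a + 2 ^ J) - s a| :=
            abs_sub_le _ _ _
        _ ≤ J * g (a + ℓ) + g (a + ℓ) := add_le_add hrest hfirst
        _ = (J + 1 : ℕ) * g (a + ℓ) := by push_cast; ring

lemma abs_sub_le_natLog_mul_of_dyadic_increments (s g : ℕ → ℝ) (hg : Monotone g)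
    (hg0 : ∀ n, 0 ≤ g n)
    (hinc : ∀ j i, |s (i * 2 ^ j + 2 ^ j) - s (i * 2 ^ j)| ≤ g (i * 2 ^ j + 2 ^ j))
    (n : ℕ) : |s n - s 0| ≤ ((Nat.log 2 n : ℝ) + 1) * g n := by
  simpa using abs_sub_le_mul_of_dyadic_increments s g hg hg0 hinc (Nat.log 2 n + 1) 0 n
    (dvd_zero _) (Nat.lt_pow_succ_log_self one_lt_two n)

lemma sum_Icc_add_sub_sum_Icc {M : Type*} [AddCommGroup M] (f : ℕ → M) (a n : ℕ) :
    ∑ k ∈ Icc 1 (a + n), f k - ∑ k ∈ Icc 1 a, f k = ∑ i : Fin n, f (i + 1 + a) := by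
  induction n with
  | zero => simp
  | succ n ih =>
    rw [← add_assoc, sum_Icc_succ_top (by omega), Fin.sum_univ_castSucc]
    simp only [Fin.val_castSucc, Fin.val_last, ← ih, show n + 1 + a = a + n + 1 by omega]
    abel

section Probability

variable {Ω : Type*} [MeasurableSpace Ω] {P : Measure Ω}

lemma identDistrib_sum_Icc_sub_sum_Icc {X : ℕ → Ω → ℝ} (hX : ∀ n, AEMeasurable (X n) P)
    (hstat : ∀ j k : ℕ,
      Measure.map (fun ω => fun i : Fin j => X (i.val + 1 + k) ω) P =
      Measure.map (fun ω => fun i : Fin j => X (i.val + 1) ω) P) (a n : ℕ) :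
    IdentDistrib (fun ω => ∑ k ∈ Icc 1 (a + n), X k ω - ∑ k ∈ Icc 1 a, X k ω)
      (fun ω => ∑ k ∈ Icc 1 n, X k ω) P P := by
  have hvec : IdentDistrib (fun ω (i : Fin n) => X (i + 1 + a) ω)
      (fun ω (i : Fin n) => X (i + 1) ω) P P :=
    ⟨aemeasurable_pi_lambda _ fun _ => hX _, aemeasurable_pi_lambda _ fun _ => hX _, hstat n a⟩
  convert hvec.comp (u := fun v : Fin n → ℝ => ∑ i, v i) (by fun_prop) using 2 with ω ω
  · exact sum_Icc_add_sub_sum_Icc (X · ω) a n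
  · simpa using sum_Icc_add_sub_sum_Icc (X · ω) 0 n

lemma meas_abs_ge_le_ofReal_integral_sq_div {f : Ω → ℝ} (hf : MemLp f 2 P) {c : ℝ}
    (hc : 0 < c) : P {ω | c ≤ |f ω|} ≤ ENNReal.ofReal ((∫ ω, f ω ^ 2 ∂P) / c ^ 2) := by
  calc P {ω | c ≤ |f ω|}
      ≤ P {ω | ENNReal.ofReal (c ^ 2) ≤ ENNReal.ofReal (f ω ^ 2)} := by
        refine measure_mono fun ω (h : c ≤ |f ω|) => ENNReal.ofReal_le_ofReal ?_
        simpa only [sq_abs] using pow_le_pow_left₀ hc.le h 2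
    _ ≤ (∫⁻ ω, ENNReal.ofReal (f ω ^ 2) ∂P) / ENNReal.ofReal (c ^ 2) :=
        meas_ge_le_lintegral_div (hf.1.aemeasurable.pow_const 2).ennreal_ofReal
          (by positivity) ENNReal.ofReal_ne_top
    _ = ENNReal.ofReal ((∫ ω, f ω ^ 2 ∂P) / c ^ 2) := by
        rw [← ofReal_integral_eq_lintegral_ofReal hf.integrable_sq
          (ae_of_all _ fun ω => sq_nonneg (f ω)), ENNReal.ofReal_div_of_pos (by positivity)]

lemma ae_eventually_abs_lt_of_summable_integral_sq_div {ι : Type*} [Countable ι]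
    {Y : ι → Ω → ℝ} {c : ι → ℝ} (hY : ∀ p, MemLp (Y p) 2 P) (hc : ∀ p, 0 < c p)
    (hsum : Summable fun p => (∫ ω, Y p ω ^ 2 ∂P) / c p ^ 2) :
    ∀ᵐ ω ∂P, ∀ᶠ p in cofinite, |Y p ω| < c p := by
  have hBC := ae_finite_setOfPred_mem (μ := P) (s := fun p => {ω | c p ≤ |Y p ω|}) <| by
    refine ne_top_of_le_ne_top ?_
      (ENNReal.tsum_le_tsum fun p => meas_abs_ge_le_ofReal_integral_sq_div (hY p) (hc p))
    rw [← ENNReal.ofReal_tsum_of_nonneg (fun p => by positivity) hsum]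
    exact ENNReal.ofReal_ne_top
  filter_upwards [hBC] with ω hω
  simpa [eventually_cofinite] using hω

end Probability

lemma exists_abs_le_mul_of_eventually_cofinite {ι : Type*} {f c : ι → ℝ} (hc : ∀ p, 0 < c p)
    (h : ∀ᶠ p in cofinite, |f p| < c p) : ∃ K, ∀ p, |f p| ≤ K * c p := by
  have hO : f =O[cofinite] c := IsBigO.of_bound 1 <| h.mono fun p hp => by
    simpa [abs_of_pos (hc p)] using hp.le
  obtain ⟨K, hK⟩ := (isBigO_cofinite_iff fun p hp => absurd hp (hc p).ne').1 hO
  exact ⟨K, fun p => by simpa [abs_of_pos (hc p)] using hK p⟩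

lemma isLittleO_natLog_add_one_mul_rpow {β δ : ℝ} (hδ : 0 < δ) :
    (fun n : ℕ => ((Nat.log 2 n : ℝ) + 1) * (n : ℝ) ^ β) =o[atTop]
      fun n : ℕ => (n : ℝ) ^ (β + δ) := by
  have hlogb : (fun x : ℝ => Real.logb 2 x + 1) =o[atTop] fun x => x ^ δ :=
    ((isLittleO_log_rpow_atTop hδ).const_mul_left (Real.log 2)⁻¹ |>.congr_left fun x => by
      rw [Real.logb, div_eq_inv_mul]).add
      ((isLittleO_one_left_iff ℝ).2 <| (tendsto_rpow_atTop hδ).congr' <|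
        (eventually_ge_atTop 0).mono fun x hx => by simp [abs_of_nonneg, Real.rpow_nonneg hx])
  have hlog : (fun n : ℕ => (Nat.log 2 n : ℝ) + 1) =o[atTop] fun n : ℕ => (n : ℝ) ^ δ := by
    refine IsBigO.trans_isLittleO (IsBigO.of_bound 1 <| Eventually.of_forall fun n => ?_)
      (hlogb.comp_tendsto tendsto_natCast_atTop_atTop)
    have h := Real.natLog_le_logb n 2
    push_cast at h
    rw [Function.comp_apply, Real.norm_of_nonneg (by positivity),
      Real.norm_of_nonneg (by linarith [(Nat.log 2 n).cast_nonneg (α := ℝ)])]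
    linarith
  refine (hlog.mul_isBigO (isBigO_refl (fun n : ℕ => (n : ℝ) ^ β) _)).congr' .rfl ?_
  filter_upwards [eventually_gt_atTop 0] with n hn
  rw [← Real.rpow_add (by positivity), add_comm]

lemma tendsto_div_rpow_of_dyadic_increments {s : ℕ → ℝ} {K β δ : ℝ} (hK : 0 ≤ K) (hβ : 0 ≤ β)
    (hδ : 0 < δ) (hs0 : s 0 = 0)
    (hinc : ∀ j i, |s (i * 2 ^ j + 2 ^ j) - s (i * 2 ^ j)| ≤
      K * ((i * 2 ^ j + 2 ^ j : ℕ) : ℝ) ^ β) :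
    Tendsto (fun n => s n / (n : ℝ) ^ (β + δ)) atTop (𝓝 0) := by
  have hO : s =O[atTop] fun n : ℕ => ((Nat.log 2 n : ℝ) + 1) * (n : ℝ) ^ β := by
    refine IsBigO.of_bound K <| Eventually.of_forall fun n => ?_
    have h := abs_sub_le_natLog_mul_of_dyadic_increments s (fun n => K * (n : ℝ) ^ β)
      (fun m n hmn => by dsimp only; gcongr) (fun n => by positivity) hinc n
    rw [hs0, sub_zero] at h
    rw [Real.norm_eq_abs, Real.norm_of_nonneg (by positivity), mul_left_comm]
    exact h
  exact (hO.trans_isLittleO (isLittleO_natLog_add_one_mul_rpow hδ)).tendsto_div_nhds_zero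

lemma summable_dyadic_rpow_div {ρ β : ℝ} (hρβ : ρ < β) (hβ : 1 / 2 < β) :
    Summable fun p : ℕ × ℕ =>
      ((2 ^ p.1 : ℕ) : ℝ) ^ (2 * ρ) / (((p.2 * 2 ^ p.1 + 2 ^ p.1 : ℕ) : ℝ) ^ β) ^ 2 := by
  have hgeom : Summable fun j : ℕ => ((2 : ℝ) ^ (2 * (ρ - β))) ^ j :=
    summable_geometric_of_lt_one (by positivity)
      (Real.rpow_lt_one_of_one_lt_of_neg one_lt_two (by linarith))
  have hpser : Summable fun i : ℕ => ((i : ℝ) + 1) ^ (-(2 * β)) := by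
    have := (summable_nat_add_iff 1).2 (Real.summable_nat_rpow.2 (by linarith : -(2 * β) < -1))
    simpa using this
  refine (hgeom.mul_of_nonneg hpser (fun _ => by positivity) fun _ => by positivity).congr ?_
  rintro ⟨j, i⟩
  have hx : (0 : ℝ) < 2 ^ j := by positivity
  have hy : (0 : ℝ) < i + 1 := by positivity
  simp only [Nat.cast_add, Nat.cast_mul, Nat.cast_pow, Nat.cast_ofNat]
  rw [Real.rpow_pow_comm zero_le_two, show (i : ℝ) * 2 ^ j + 2 ^ j = (i + 1) * 2 ^ j by ring]
  generalize (2 : ℝ) ^ j = x at hx ⊢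
  rw [← Real.rpow_mul_natCast (by positivity), Real.mul_rpow hy.le hx.le, Real.rpow_neg hy.le,
    show 2 * (ρ - β) = 2 * ρ - β * (2 : ℕ) by push_cast; ring, Real.rpow_sub hx]
  field_simp
  congr 1
  push_cast
  ring

lemma ae_eventually_abs_dyadic_increment_lt {Ω : Type*} [MeasurableSpace Ω] {P : Measure Ω}
    {X : ℕ → Ω → ℝ} (hXL2 : ∀ n, MemLp (X n) 2 P)
    (hstat : ∀ j k : ℕ,
      Measure.map (fun ω => fun i : Fin j => X (i.val + 1 + k) ω) P =
      Measure.map (fun ω => fun i : Fin j => X (i.val + 1) ω) P)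
    {C ρ β : ℝ} (hvar : ∀ n : ℕ, 1 ≤ n →
      (∫ ω, (∑ k ∈ Icc 1 n, X k ω) ^ 2 ∂P) ≤ C * (n : ℝ) ^ (2 * ρ))
    (hρβ : ρ < β) (hβ : 1 / 2 < β) :
    ∀ᵐ ω ∂P, ∀ᶠ p : ℕ × ℕ in cofinite,
      |∑ k ∈ Icc 1 (p.2 * 2 ^ p.1 + 2 ^ p.1), X k ω - ∑ k ∈ Icc 1 (p.2 * 2 ^ p.1), X k ω| <
        ((p.2 * 2 ^ p.1 + 2 ^ p.1 : ℕ) : ℝ) ^ β := by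
  have hsq : ∀ p : ℕ × ℕ,
      ∫ ω, (∑ k ∈ Icc 1 (p.2 * 2 ^ p.1 + 2 ^ p.1), X k ω -
        ∑ k ∈ Icc 1 (p.2 * 2 ^ p.1), X k ω) ^ 2 ∂P ≤ C * ((2 ^ p.1 : ℕ) : ℝ) ^ (2 * ρ) := fun p =>
    (((identDistrib_sum_Icc_sub_sum_Icc (fun n => (hXL2 n).1.aemeasurable) hstat
      (p.2 * 2 ^ p.1) (2 ^ p.1)).comp (u := fun x : ℝ => x ^ 2) (by fun_prop)).integral_eq).trans_le
      (hvar _ Nat.one_le_two_pow)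
  refine ae_eventually_abs_lt_of_summable_integral_sq_div
    (fun p => (memLp_finsetSum _ fun k _ => hXL2 k).sub (memLp_finsetSum _ fun k _ => hXL2 k))
    (fun p => by positivity) ?_
  refine ((summable_dyadic_rpow_div hρβ hβ).mul_left C).of_nonneg_of_le
    (fun p => by positivity) fun p => ?_
  rw [mul_div_assoc']
  exact div_le_div_of_nonneg_right (hsq p) (by positivity)

theorem stmt_14_general
    {Ω : Type*} [MeasurableSpace Ω] (P : Measure Ω)
    (X : ℕ → Ω → ℝ)
    (hXL2 : ∀ n, MemLp (X n) 2 P)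
    -- stationarity: the law of (X_{1+k},…,X_{j+k}) does not depend on k
    (hstat : ∀ j k : ℕ,
      Measure.map (fun ω => fun i : Fin j => X (i.val + 1 + k) ω) P =
      Measure.map (fun ω => fun i : Fin j => X (i.val + 1) ω) P)
    (C ρ : ℝ)
    (hvar : ∀ n : ℕ, 1 ≤ n →
      (∫ ω, (∑ k ∈ Finset.Icc 1 n, X k ω) ^ 2 ∂P) ≤ C * (n : ℝ) ^ (2 * ρ)) :
    ∀ ε : ℝ, 0 < ε →
      ∀ᵐ ω ∂P, Tendsto
        (fun n : ℕ => (∑ k ∈ Finset.Icc 1 n, X k ω) / (n : ℝ) ^ (max ρ (1 / 2) + ε))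
        atTop (𝓝 0) := by
  intro ε hε
  set β := max ρ (1 / 2) + ε / 2 with hβ_def
  have hρβ : ρ < β := by linarith [le_max_left ρ (1 / 2)]
  have hβ : 1 / 2 < β := by linarith [le_max_right ρ (1 / 2)]
  filter_upwards [ae_eventually_abs_dyadic_increment_lt hXL2 hstat hvar hρβ hβ] with ω hω
  obtain ⟨K, hK⟩ := exists_abs_le_mul_of_eventually_cofinite (fun p => by positivity) hω
  have hK0 : 0 ≤ K :=
    nonneg_of_mul_nonneg_left ((abs_nonneg _).trans (hK (0, 0))) (by positivity)
  have h := tendsto_div_rpow_of_dyadic_increments (s := fun n => ∑ k ∈ Icc 1 n, X k ω) (β := β)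
    hK0 (by linarith) (half_pos hε) (by simp) fun j i => hK (j, i)
  rwa [show β + ε / 2 = max ρ (1 / 2) + ε by ring] at h

/-- Lemma 7.1 of the paper: if `(X_n)_{n≥1}` is a stationary sequence of square-integrable
random variables whose partial sums satisfy `E(S_n²) ≤ C n^{2ρ}`, then
`S_n / n^{max(ρ,1/2)+ε} → 0` almost surely for every `ε > 0`. -/
theorem stmt_14
    {Ω : Type*} [MeasurableSpace Ω] (P : Measure Ω) [IsProbabilityMeasure P]
    (X : ℕ → Ω → ℝ)
    (hXm : ∀ n, Measurable (X n))
    (hXL2 : ∀ n, MemLp (X n) 2 P)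
    -- stationarity: the law of (X_{1+k},…,X_{j+k}) does not depend on k
    (hstat : ∀ j k : ℕ,
      Measure.map (fun ω => fun i : Fin j => X (i.val + 1 + k) ω) P =
      Measure.map (fun ω => fun i : Fin j => X (i.val + 1) ω) P)
    (C ρ : ℝ) (hC : 0 < C) (hρ : 0 < ρ)
    (hvar : ∀ n : ℕ, 1 ≤ n →
      (∫ ω, (∑ k ∈ Finset.Icc 1 n, X k ω) ^ 2 ∂P) ≤ C * (n : ℝ) ^ (2 * ρ)) :
    ∀ ε : ℝ, 0 < ε →
      ∀ᵐ ω ∂P, Tendsto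
        (fun n : ℕ => (∑ k ∈ Finset.Icc 1 n, X k ω) / (n : ℝ) ^ (max ρ (1 / 2) + ε))
        atTop (𝓝 0) :=
  stmt_14_general P X hXL2 hstat C ρ hvar
end

section
/- Fix an integer d ≥ 1 and constants δ₀, c₁ > 0. There exists a constant C₂ > 0, depending only on d, δ₀, c₁, with the following property: for every integer N ≥ 1 and every ℝ^d-valued random variable S whose characteristic function satisfies |E(e^{i⟨ξ, S⟩})| ≤ e^{−c₁ N |ξ|²} for every ξ ∈ ℝ^d with |ξ| ≤ δ₀, one has P(S ∈ Q) ≤ C₂ N^{−d/2} for every cube Q ⊂ ℝ^d of side length 1. -/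
/-!
Let `μ` be Lebesgue measure on the ball `B = B(0, r)`. Its characteristic function has real part
at least `|B| / 2` on the ball of radius `1 / r`, so
`(|B| / 2)² P(S ∈ B(a, 1 / r)) ≤ E ‖charFun μ (S - a)‖²`. Expanding the square and applying Fubini,
the right-hand side is at most `∫∫_{B × B} ‖charFun (law S) (ξ - η)‖ dξ dη`, and once `2r ≤ δ₀` the
hypothesis bounds this by `∫∫_{B × B} exp(-c₁N‖ξ - η‖²) ≤ |B| (π / (c₁N))^{d/2}`. A unit cube lies
in the ball of radius `√d` about its corner, so `r = min (δ₀ / 2) (1 + √d)⁻¹` works, with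
`C₂ = 4 (π / c₁)^{d/2} / |B|`.
-/

open MeasureTheory Complex Metric
open scoped RealInnerProductSpace

lemma half_le_cos_of_abs_le_one {x : ℝ} (hx : |x| ≤ 1) : 1 / 2 ≤ Real.cos x := by
  have hx2 : x ^ 2 ≤ 1 := by nlinarith [sq_abs x, abs_nonneg x]
  linarith [Real.one_sub_sq_div_two_le_cos (x := x)]

section CharFun

variable {E : Type*} [NormedAddCommGroup E] [InnerProductSpace ℝ E] [MeasurableSpace E]

lemma ofReal_norm_sq_charFun (μ : Measure E) [SFinite μ] (t : E) :
    ((‖charFun μ t‖ ^ 2 : ℝ) : ℂ) = ∫ p, cexp (⟪p.1 - p.2, t⟫ * I) ∂(μ.prod μ) := by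
  rw [ofReal_pow, ← mul_conj', ← charFun_neg, charFun_apply, charFun_apply, ← integral_prod_mul]
  congr with p
  rw [← Complex.exp_add, inner_sub_left, inner_neg_right]
  push_cast
  ring_nf

variable [BorelSpace E]

lemma norm_charFun_map_add_const (μ : Measure E) (r t : E) :
    ‖charFun (μ.map (· + r)) t‖ = ‖charFun μ t‖ := by
  rw [charFun_map_add_const, norm_mul, norm_exp_ofReal_mul_I, mul_one]

lemma half_measureReal_le_re_charFun {μ : Measure E} [IsFiniteMeasure μ] {t : E}
    (h : ∀ᵐ x ∂μ, |⟪x, t⟫| ≤ 1) : μ.real Set.univ / 2 ≤ (charFun μ t).re := by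
  have hint : Integrable (fun x ↦ cexp (⟪x, t⟫ * I)) μ :=
    (integrable_const (1 : ℝ)).mono (by fun_prop) (by simp)
  calc μ.real Set.univ / 2 = ∫ _, (1 / 2 : ℝ) ∂μ := by simp [div_eq_mul_inv, mul_comm]
    _ ≤ ∫ x, Real.cos ⟪x, t⟫ ∂μ :=
        integral_mono_ae (integrable_const _)
          ((integrable_const (1 : ℝ)).mono (by fun_prop) (by simp [Real.abs_cos_le_one]))
          (h.mono fun x hx ↦ half_le_cos_of_abs_le_one hx)
    _ = (charFun μ t).re := by
        rw [charFun_apply, ← reCLM_apply, ← ContinuousLinearMap.integral_comp_comm _ hint]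
        simp [exp_ofReal_mul_I_re]

variable [SecondCountableTopology E]

lemma ofReal_integral_norm_sq_charFun (μ ν : Measure E) [IsFiniteMeasure μ]
    [IsFiniteMeasure ν] :
    ((∫ t, ‖charFun μ t‖ ^ 2 ∂ν : ℝ) : ℂ) = ∫ p, charFun ν (p.1 - p.2) ∂(μ.prod μ) := by
  have hint : Integrable (Function.uncurry fun (t : E) (p : E × E) ↦
      cexp (⟪p.1 - p.2, t⟫ * I)) (ν.prod (μ.prod μ)) :=
    (integrable_const (1 : ℝ)).mono (by fun_prop) (by simp [Function.uncurry])
  rw [← integral_complex_ofReal]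
  simp_rw [ofReal_norm_sq_charFun, integral_integral_swap hint,
    charFun_apply, real_inner_comm]

lemma integral_norm_sq_charFun_le (μ ν : Measure E) [IsFiniteMeasure μ] [IsFiniteMeasure ν] :
    ∫ t, ‖charFun μ t‖ ^ 2 ∂ν ≤ ∫ p, ‖charFun ν (p.1 - p.2)‖ ∂(μ.prod μ) := by
  calc ∫ t, ‖charFun μ t‖ ^ 2 ∂ν = ‖((∫ t, ‖charFun μ t‖ ^ 2 ∂ν : ℝ) : ℂ)‖ := by
        rw [norm_real, Real.norm_of_nonneg (by positivity)]
    _ ≤ _ := by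
        rw [ofReal_integral_norm_sq_charFun]
        exact norm_integral_le_integral_norm _

end CharFun

lemma integrable_exp_neg_mul_norm_sub_sq {F : Type*} [SeminormedAddCommGroup F]
    [MeasurableSpace F] [OpensMeasurableSpace F] [SecondCountableTopology F]
    (κ : Measure (F × F)) [IsFiniteMeasure κ] {b : ℝ} (hb : 0 ≤ b) :
    Integrable (fun p ↦ Real.exp (-b * ‖p.1 - p.2‖ ^ 2)) κ :=
  Integrable.of_bound (by fun_prop) 1 (ae_of_all _ fun p ↦ by
    rw [Real.norm_of_nonneg (Real.exp_pos _).le, Real.exp_le_one_iff, neg_mul, neg_nonpos]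
    positivity)

section FiniteDimensional

variable {E : Type*} [NormedAddCommGroup E] [InnerProductSpace ℝ E] [FiniteDimensional ℝ E]
  [MeasurableSpace E] [BorelSpace E]

lemma integral_exp_neg_mul_norm_sub_sq_le {s : Set E} (hs : volume s ≠ ⊤) {b : ℝ} (hb : 0 < b) :
    ∫ p, Real.exp (-b * ‖p.1 - p.2‖ ^ 2) ∂((volume.restrict s).prod (volume.restrict s))
      ≤ volume.real s * (Real.pi / b) ^ (Module.finrank ℝ E / 2 : ℝ) := by
  have : IsFiniteMeasure (volume.restrict s) := isFiniteMeasure_restrict.2 hs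
  have hgauss : Integrable (fun v : E ↦ Real.exp (-b * ‖v‖ ^ 2)) :=
    Integrable.of_integral_ne_zero
      (by rw [GaussianFourier.integral_rexp_neg_mul_sq_norm hb]; positivity)
  have hint :=
    integrable_exp_neg_mul_norm_sub_sq ((volume.restrict s).prod (volume.restrict s)) hb.le
  have hslice (ξ : E) :
      ∫ η in s, Real.exp (-b * ‖ξ - η‖ ^ 2) ≤ (Real.pi / b) ^ (Module.finrank ℝ E / 2 : ℝ) :=
    calc ∫ η in s, Real.exp (-b * ‖ξ - η‖ ^ 2) ≤ ∫ η, Real.exp (-b * ‖ξ - η‖ ^ 2) :=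
          setIntegral_le_integral (hgauss.comp_sub_left ξ)
            (ae_of_all _ fun _ ↦ (Real.exp_pos _).le)
      _ = ∫ v, Real.exp (-b * ‖v‖ ^ 2) :=
          integral_sub_left_eq_self (fun v : E ↦ Real.exp (-b * ‖v‖ ^ 2)) _ ξ
      _ = _ := GaussianFourier.integral_rexp_neg_mul_sq_norm hb
  calc _ = ∫ ξ in s, ∫ η in s, Real.exp (-b * ‖ξ - η‖ ^ 2) := integral_prod _ hint
    _ ≤ ∫ _ in s, (Real.pi / b) ^ (Module.finrank ℝ E / 2 : ℝ) :=
        integral_mono hint.integral_prod_left (integrable_const _) hslice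
    _ = _ := by simp

theorem measureReal_closedBall_le_of_norm_charFun_le {ν : Measure E} [IsProbabilityMeasure ν]
    {r ρ δ b : ℝ} (hr : 0 < r) (hrδ : 2 * r ≤ δ) (hrρ : r * ρ ≤ 1) (hb : 0 < b)
    (hν : ∀ t : E, ‖t‖ ≤ δ → ‖charFun ν t‖ ≤ Real.exp (-b * ‖t‖ ^ 2)) (a : E) :
    ν.real (closedBall a ρ)
      ≤ 4 * (Real.pi / b) ^ (Module.finrank ℝ E / 2 : ℝ) / volume.real (closedBall (0 : E) r) := by
  set B := closedBall (0 : E) r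
  set m := volume.real B
  set μ := volume.restrict B
  have hm : 0 < m :=
    ENNReal.toReal_pos (measure_closedBall_pos _ _ hr).ne' measure_closedBall_lt_top.ne
  have hμ : μ.real Set.univ = m := by simp [μ, m]
  have : IsFiniteMeasure μ := isFiniteMeasure_restrict.2 measure_closedBall_lt_top.ne
  set ν' := ν.map (· + -a)
  have : IsProbabilityMeasure ν' := Measure.isProbabilityMeasure_map (by fun_prop)
  have hball : ν.real (closedBall a ρ) = ν'.real (closedBall 0 ρ) := by
    rw [map_measureReal_apply (by fun_prop) measurableSet_closedBall]
    congr 1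
    ext x
    simp [dist_eq_norm, sub_eq_add_neg]
  have hlow : closedBall 0 ρ ⊆ {t | (m / 2) ^ 2 ≤ ‖charFun μ t‖ ^ 2} := by
    intro t ht
    have hinner : ∀ᵐ x ∂μ, |⟪x, t⟫| ≤ 1 := by
      filter_upwards [ae_restrict_mem measurableSet_closedBall] with x hx
      rw [mem_closedBall_zero_iff] at hx ht
      calc |⟪x, t⟫| ≤ ‖x‖ * ‖t‖ := abs_real_inner_le_norm x t
        _ ≤ r * ρ := mul_le_mul hx ht (norm_nonneg _) hr.le
        _ ≤ 1 := hrρ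
    have := half_measureReal_le_re_charFun hinner
    rw [hμ] at this
    exact pow_le_pow_left₀ (by positivity) (this.trans (re_le_norm _)) 2
  have hsq : Integrable (fun t ↦ ‖charFun μ t‖ ^ 2) ν' :=
    Integrable.of_bound (by fun_prop) (m ^ 2) (ae_of_all _ fun t ↦ by
      rw [Real.norm_of_nonneg (by positivity), ← hμ]
      exact pow_le_pow_left₀ (norm_nonneg _) (norm_charFun_le t) 2)
  have hdecay : ∀ᵐ p ∂(μ.prod μ),
      ‖charFun ν' (p.1 - p.2)‖ ≤ Real.exp (-b * ‖p.1 - p.2‖ ^ 2) := by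
    rw [Measure.prod_restrict]
    filter_upwards [ae_restrict_mem (measurableSet_closedBall.prod measurableSet_closedBall)]
      with p hp
    rw [norm_charFun_map_add_const]
    apply hν
    have h1 := mem_closedBall_zero_iff.1 hp.1
    have h2 := mem_closedBall_zero_iff.1 hp.2
    linarith [norm_sub_le p.1 p.2]
  calc ν.real (closedBall a ρ) = (m / 2) ^ 2 * ν'.real (closedBall 0 ρ) / (m / 2) ^ 2 := by
        rw [hball]; field_simp
    _ ≤ (∫ t, ‖charFun μ t‖ ^ 2 ∂ν') / (m / 2) ^ 2 := by
        gcongr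
        exact (mul_le_mul_of_nonneg_left (measureReal_mono hlow) (by positivity)).trans
          (mul_meas_ge_le_integral_of_nonneg (ae_of_all _ fun _ ↦ by positivity) hsq _)
    _ ≤ (∫ p, Real.exp (-b * ‖p.1 - p.2‖ ^ 2) ∂(μ.prod μ)) / (m / 2) ^ 2 := by
        gcongr
        exact (integral_norm_sq_charFun_le μ ν').trans <|
          integral_mono_of_nonneg (ae_of_all _ fun _ ↦ norm_nonneg _)
            (integrable_exp_neg_mul_norm_sub_sq _ hb.le) hdecay
    _ ≤ m * (Real.pi / b) ^ (Module.finrank ℝ E / 2 : ℝ) / (m / 2) ^ 2 := by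
        gcongr
        exact integral_exp_neg_mul_norm_sub_sq_le measure_closedBall_lt_top.ne hb
    _ = _ := by field_simp; ring

end FiniteDimensional

lemma EuclideanSpace.dist_le_sqrt_card_mul {ι : Type*} [Fintype ι] {x y : EuclideanSpace ℝ ι}
    {ε : ℝ} (h : ∀ i, dist (x i) (y i) ≤ ε) : dist x y ≤ √(Fintype.card ι) * ε := by
  rcases isEmpty_or_nonempty ι with hι | ⟨⟨i⟩⟩
  · simp [Subsingleton.elim x y]
  have hε : 0 ≤ ε := dist_nonneg.trans (h i)
  calc dist x y = √(∑ i, dist (x i) (y i) ^ 2) := EuclideanSpace.dist_eq x y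
    _ ≤ √(∑ _ : ι, ε ^ 2) := by gcongr with i; exact h i
    _ = √(Fintype.card ι) * ε := by
        rw [Finset.sum_const, Finset.card_univ, nsmul_eq_mul, Real.sqrt_mul (by positivity),
          Real.sqrt_sq hε]

theorem stmt_17_general
    (d : ℕ) (δ₀ c₁ : ℝ) (hδ₀ : 0 < δ₀) (hc₁ : 0 < c₁) :
    ∃ C₂ : ℝ, 0 < C₂ ∧
      ∀ N : ℕ, 1 ≤ N →
      ∀ (Ω : Type) (_ : MeasurableSpace Ω) (P : Measure Ω), IsProbabilityMeasure P →
      ∀ S : Ω → EuclideanSpace ℝ (Fin d), Measurable S →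
      (∀ ξ : EuclideanSpace ℝ (Fin d), ‖ξ‖ ≤ δ₀ →
        ‖∫ ω, Complex.exp (Complex.I * ((inner ℝ ξ (S ω) : ℝ) : ℂ)) ∂P‖
          ≤ Real.exp (-c₁ * N * ‖ξ‖ ^ 2)) →
      ∀ a : EuclideanSpace ℝ (Fin d),
        (P {ω | ∀ i, a i ≤ S ω i ∧ S ω i ≤ a i + 1}).toReal
          ≤ C₂ * (N : ℝ) ^ (-(d : ℝ) / 2) := by
  set r := min (δ₀ / 2) (1 + √d)⁻¹
  have hr : 0 < r := lt_min (by positivity) (by positivity)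
  have hrd : r * √d ≤ 1 :=
    calc r * √d ≤ (1 + √d)⁻¹ * (1 + √d) := by gcongr; exacts [min_le_right _ _, by linarith]
      _ = 1 := inv_mul_cancel₀ (by positivity)
  have hvol : 0 < volume.real (closedBall (0 : EuclideanSpace ℝ (Fin d)) r) :=
    ENNReal.toReal_pos (measure_closedBall_pos _ _ hr).ne' measure_closedBall_lt_top.ne
  refine ⟨4 * (Real.pi / c₁) ^ (d / 2 : ℝ)
    / volume.real (closedBall (0 : EuclideanSpace ℝ (Fin d)) r), by positivity, ?_⟩
  intro N hN Ω _ P _ S hS hφ a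
  have hN0 : (0 : ℝ) < N := by exact_mod_cast hN
  have := Measure.isProbabilityMeasure_map (μ := P) hS.aemeasurable
  have hlaw (t : EuclideanSpace ℝ (Fin d)) (ht : ‖t‖ ≤ δ₀) :
      ‖charFun (P.map S) t‖ ≤ Real.exp (-(c₁ * N) * ‖t‖ ^ 2) := by
    rw [charFun_apply, integral_map hS.aemeasurable (by fun_prop)]
    simpa [real_inner_comm, mul_comm, mul_assoc] using hφ t ht
  have hcube : {ω | ∀ i, a i ≤ S ω i ∧ S ω i ≤ a i + 1} ⊆ S ⁻¹' closedBall a √d := fun ω hω ↦ by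
    simpa using EuclideanSpace.dist_le_sqrt_card_mul (x := S ω) (y := a) (ε := 1) fun i ↦ by
      rw [Real.dist_eq, abs_le]; constructor <;> linarith [hω i]
  calc (P {ω | ∀ i, a i ≤ S ω i ∧ S ω i ≤ a i + 1}).toReal
      ≤ (P.map S).real (closedBall a √d) := by
        rw [map_measureReal_apply hS measurableSet_closedBall]; exact measureReal_mono hcube
    _ ≤ 4 * (Real.pi / (c₁ * N)) ^ (d / 2 : ℝ)
          / volume.real (closedBall (0 : EuclideanSpace ℝ (Fin d)) r) := by
        simpa using measureReal_closedBall_le_of_norm_charFun_le hr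
          (by linarith [min_le_left (δ₀ / 2) (1 + √d)⁻¹]) hrd (by positivity) hlaw a
    _ = _ := by
        rw [← div_div, Real.div_rpow (by positivity) hN0.le, neg_div, Real.rpow_neg hN0.le]
        field_simp

/-- The anticoncentration bound derived from Lemma A.1 of the paper: if the characteristic
function of an `ℝ^d`-valued random variable `S` satisfies
`|E(e^{i⟨ξ,S⟩})| ≤ e^{−c₁N|ξ|²}` for `|ξ| ≤ δ₀`, then `P(S ∈ Q) ≤ C₂ N^{−d/2}` for every
unit cube `Q`, with `C₂` depending only on `d, δ₀, c₁`. -/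
theorem stmt_17
    (d : ℕ) (hd : 1 ≤ d) (δ₀ c₁ : ℝ) (hδ₀ : 0 < δ₀) (hc₁ : 0 < c₁) :
    ∃ C₂ : ℝ, 0 < C₂ ∧
      ∀ N : ℕ, 1 ≤ N →
      ∀ (Ω : Type) (_ : MeasurableSpace Ω) (P : Measure Ω), IsProbabilityMeasure P →
      ∀ S : Ω → EuclideanSpace ℝ (Fin d), Measurable S →
      (∀ ξ : EuclideanSpace ℝ (Fin d), ‖ξ‖ ≤ δ₀ →
        ‖∫ ω, Complex.exp (Complex.I * ((inner ℝ ξ (S ω) : ℝ) : ℂ)) ∂P‖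
          ≤ Real.exp (-c₁ * N * ‖ξ‖ ^ 2)) →
      ∀ a : EuclideanSpace ℝ (Fin d),
        (P {ω | ∀ i, a i ≤ S ω i ∧ S ω i ≤ a i + 1}).toReal
          ≤ C₂ * (N : ℝ) ^ (-(d : ℝ) / 2) :=
  stmt_17_general d δ₀ c₁ hδ₀ hc₁
end

section
/- Assume: (Gibbs/quasi-independence) there is K ≥ 1 such that μ(C' ∩ σ^{−n} C'') ≤ K μ(C') μ(C'') for every n ≥ 1, every cylinder C' of length n and every cylinder C''; (bounded distortion) there is R > 0 such that for every N ≥ 1 and every cylinder C of length N, the diameter of τ_N(C) in ℝ^d is at most R; (large deviations) there are C₂, c₂ > 0 with μ(|τ_N| > L) ≤ C₂ e^{−c₂ L²/N} for all N ≥ 1 and L > 0; (anticoncentration) μ(τ_N ∈ 𝒬) ≤ C₂ N^{−d/2} for every N ≥ 1 and every unit cube 𝒬 ⊂ ℝ^d. Then there are constants C₃, c₃ > 0 such that for every N ≥ 1 and every unit cube 𝒬 ⊂ ℝ^d centered at z, μ(τ_N ∈ 𝒬) ≤ C₃ N^{−d/2} e^{−c₃ |z|²/N}. -/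
/-!
Induction on `N`. For `|z|² ≤ T N` anticoncentration alone gives the bound, and for `N = 1` the
large deviation bound does. Otherwise split `τ_N = τ_n + τ_m ∘ σ^n` with `n = ⌊N/2⌋` and
condition on the first `n` symbols: on a cylinder `[w]` the first block is within `R` of `v_w`,
so quasi-independence bounds `μ(τ_N ∈ 𝒬_z, [w])` by `K μ[w]` times the probability that `τ_m`
lies in a ball around `z - v_w`, which is covered by boundedly many unit cubes. Cylinders with
`|v_w| > |z|/20` have total mass `≲ e^{-c|z|²/N}` by large deviations, and anticoncentration
bounds their cubes. For the other cylinders every cube is at distance `≥ 0.9|z|` from the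
origin, and the induction hypothesis at time `m ≤ 2N/3` gains a factor `e^{-c|z|²/(5N)}`,
which absorbs the constants once `T` is large.
-/

open MeasureTheory Filter Topology

noncomputable section

/-- The left shift on `Σ = 𝒜^ℕ`. -/
def shift {A : Type*} : (ℕ → A) → (ℕ → A) := fun ω n => ω (n + 1)

/-- The cylinder of length `n` determined by the word `w`. -/
def cylinder {A : Type*} (n : ℕ) (w : ℕ → A) : Set (ℕ → A) :=
  {ω | ∀ i < n, ω i = w i}

/-- Birkhoff sums `τ_N = ∑_{n<N} τ ∘ σ^n` of an `ℝ^d`-valued observable over the shift. -/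
def birkhoffShift {A : Type*} {d : ℕ} (τ : (ℕ → A) → EuclideanSpace ℝ (Fin d))
    (N : ℕ) (ω : ℕ → A) : EuclideanSpace ℝ (Fin d) :=
  ∑ n ∈ Finset.range N, τ (shift^[n] ω)

/-- The closed unit cube in `ℝ^d` centered at `z`. -/
def unitCubeAt {d : ℕ} (z : EuclideanSpace ℝ (Fin d)) : Set (EuclideanSpace ℝ (Fin d)) :=
  {t | ∀ i, z i - 1 / 2 ≤ t i ∧ t i ≤ z i + 1 / 2}

/-- The closed unit cube in `ℝ^d` with corner `a`. -/
def unitCubeCorner {d : ℕ} (a : EuclideanSpace ℝ (Fin d)) : Set (EuclideanSpace ℝ (Fin d)) :=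
  {t | ∀ i, a i ≤ t i ∧ t i ≤ a i + 1}

open Metric

section Cubes

variable {d : ℕ}

theorem norm_le_sqrt_mul_of_forall_abs_le {x : EuclideanSpace ℝ (Fin d)} {c : ℝ} (hc : 0 ≤ c)
    (h : ∀ i, |x i| ≤ c) : ‖x‖ ≤ √d * c := by
  rw [EuclideanSpace.norm_eq, ← Real.sqrt_sq hc, ← Real.sqrt_mul (Nat.cast_nonneg d)]
  refine Real.sqrt_le_sqrt ?_
  calc ∑ i, ‖x i‖ ^ 2 ≤ ∑ _i : Fin d, c ^ 2 :=
        Finset.sum_le_sum fun i _ => pow_le_pow_left₀ (norm_nonneg _) (h i) 2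
    _ = d * c ^ 2 := by simp

theorem unitCubeAt_subset_closedBall (z : EuclideanSpace ℝ (Fin d)) :
    unitCubeAt z ⊆ closedBall z (√d / 2) := by
  intro t ht
  rw [mem_closedBall, dist_eq_norm, div_eq_mul_one_div]
  refine norm_le_sqrt_mul_of_forall_abs_le (by norm_num) fun i => ?_
  rw [PiLp.sub_apply, abs_le]
  constructor <;> linarith [(ht i).1, (ht i).2]

theorem unitCubeAt_eq_unitCubeCorner (z : EuclideanSpace ℝ (Fin d)) :
    unitCubeAt z = unitCubeCorner (WithLp.toLp 2 fun i => z i - 1 / 2) := by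
  ext t
  refine forall_congr' fun i => ?_
  rw [PiLp.toLp_apply]
  constructor <;> rintro ⟨h₁, h₂⟩ <;> constructor <;> linarith

/-- The number of unit cubes in the covering of a ball of radius `r` given by
`closedBall_subset_iUnion_unitCubeAt`. -/
def cubeCount (d : ℕ) (r : ℝ) : ℕ := (⌊2 * r⌋₊ + 1) ^ d

theorem cubeCount_pos (d : ℕ) (r : ℝ) : 0 < cubeCount d r := pow_pos (Nat.succ_pos _) _

theorem closedBall_subset_iUnion_unitCubeAt (x : EuclideanSpace ℝ (Fin d)) {r : ℝ}
    (hr : 0 ≤ r) :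
    ∃ y : (Fin d → Fin (⌊2 * r⌋₊ + 1)) → EuclideanSpace ℝ (Fin d),
      (∀ j, ‖y j - x‖ ≤ √d * (r + 1)) ∧ closedBall x r ⊆ ⋃ j, unitCubeAt (y j) := by
  refine ⟨fun j => WithLp.toLp 2 fun i => x i - r + (j i : ℕ) + 1 / 2, fun j => ?_,
    fun t ht => ?_⟩
  · refine norm_le_sqrt_mul_of_forall_abs_le (by linarith) fun i => ?_
    have hj : ((j i : ℕ) : ℝ) ≤ 2 * r :=
      (Nat.cast_le.2 (Nat.lt_succ_iff.1 (j i).2)).trans (Nat.floor_le (by positivity))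
    rw [PiLp.sub_apply, PiLp.toLp_apply, abs_le]
    constructor <;> linarith [Nat.cast_nonneg (α := ℝ) (j i : ℕ)]
  · have hs : ∀ i, 0 ≤ t i - x i + r ∧ t i - x i + r ≤ 2 * r := fun i => by
      have := (PiLp.norm_apply_le (t - x) i).trans (mem_closedBall_iff_norm.1 ht)
      rw [PiLp.sub_apply, Real.norm_eq_abs, abs_le] at this
      constructor <;> linarith [this.1, this.2]
    refine Set.mem_iUnion.2 ⟨fun i => ⟨⌊t i - x i + r⌋₊,
      Nat.lt_succ_of_le (Nat.floor_le_floor (hs i).2)⟩, fun i => ?_⟩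
    rw [PiLp.toLp_apply]
    have h₁ := Nat.floor_le (hs i).1
    have h₂ := Nat.lt_floor_add_one (t i - x i + r)
    constructor <;> linarith

theorem measureReal_preimage_closedBall_le_cubeCount_mul {Ω : Type*} [MeasurableSpace Ω]
    (ν : Measure Ω) [IsFiniteMeasure ν] (f : Ω → EuclideanSpace ℝ (Fin d)) (x : EuclideanSpace ℝ (Fin d))
    {r b : ℝ} (hr : 0 ≤ r)
    (hb : ∀ y, ‖y - x‖ ≤ √d * (r + 1) → ν.real (f ⁻¹' unitCubeAt y) ≤ b) :
    ν.real (f ⁻¹' closedBall x r) ≤ cubeCount d r * b := by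
  obtain ⟨y, hyx, hcover⟩ := closedBall_subset_iUnion_unitCubeAt x hr
  calc ν.real (f ⁻¹' closedBall x r) ≤ ν.real (⋃ j, f ⁻¹' unitCubeAt (y j)) := by
        rw [← Set.preimage_iUnion]; exact measureReal_mono (Set.preimage_mono hcover)
    _ ≤ ∑ j, ν.real (f ⁻¹' unitCubeAt (y j)) := measureReal_iUnion_fintype_le _
    _ ≤ ∑ _j : Fin d → Fin (⌊2 * r⌋₊ + 1), b := Finset.sum_le_sum fun j _ => hb _ (hyx j)
    _ = cubeCount d r * b := by simp [cubeCount]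

end Cubes

theorem birkhoffShift_add {A : Type*} {d : ℕ} (τ : (ℕ → A) → EuclideanSpace ℝ (Fin d))
    (n m : ℕ) (ω : ℕ → A) :
    birkhoffShift τ (n + m) ω = birkhoffShift τ n ω + birkhoffShift τ m (shift^[n] ω) := by
  rw [birkhoffShift, birkhoffShift, birkhoffShift, Finset.sum_range_add]
  simp only [add_comm n, Function.iterate_add_apply]

section Cylinders

variable {A : Type*}

theorem self_mem_cylinder (n : ℕ) (w : ℕ → A) : w ∈ cylinder n w := fun _ _ => rfl

theorem measurableSet_cylinder [MeasurableSpace A] [MeasurableSingletonClass A] (n : ℕ)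
    (w : ℕ → A) : MeasurableSet (cylinder n w) := by
  have : cylinder n w = ⋂ i ∈ Finset.range n, (fun ω : ℕ → A => ω i) ⁻¹' {w i} := by
    ext ω; simp [_root_.cylinder]
  rw [this]
  exact Finset.measurableSet_biInter _ fun i _ => measurable_pi_apply i (.singleton _)

variable [Nonempty A]

/-- Extends a word of length `n` arbitrarily, so that the cylinders of length `n` are indexed
by the finite type `Fin n → A`. -/
def extendWord {n : ℕ} (w : Fin n → A) : ℕ → A :=
  fun i => if h : i < n then w ⟨i, h⟩ else Classical.arbitrary A

theorem mem_cylinder_extendWord (n : ℕ) (ω : ℕ → A) :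
    ω ∈ cylinder n (extendWord fun i : Fin n => ω i) := by
  intro i hi
  simp [extendWord, hi]

theorem pairwiseDisjoint_cylinder_extendWord (n : ℕ) (s : Set (Fin n → A)) :
    s.PairwiseDisjoint fun w => cylinder n (extendWord w) := by
  refine fun w _ v _ hwv => Set.disjoint_left.2 fun ω hw hv => hwv (funext fun i => ?_)
  have h₁ := hw i i.2
  have h₂ := hv i i.2
  simp only [extendWord, i.2, dif_pos] at h₁ h₂
  rw [← h₁, ← h₂]

variable [MeasurableSpace A] (μ : Measure (ℕ → A)) [IsFiniteMeasure μ]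

theorem measureReal_le_sum_inter_cylinder [Fintype A] (n : ℕ) (s : Set (ℕ → A)) :
    μ.real s ≤ ∑ w : Fin n → A, μ.real (s ∩ cylinder n (extendWord w)) := by
  refine (measureReal_mono fun ω hω => ?_).trans (measureReal_iUnion_fintype_le _)
  exact Set.mem_iUnion.2 ⟨fun i => ω i, hω, mem_cylinder_extendWord n ω⟩

theorem sum_measureReal_cylinder_le [MeasurableSingletonClass A] {n : ℕ}
    {F : Finset (Fin n → A)} {s : Set (ℕ → A)} (hs : ∀ w ∈ F, cylinder n (extendWord w) ⊆ s) :
    ∑ w ∈ F, μ.real (cylinder n (extendWord w)) ≤ μ.real s := by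
  rw [← measureReal_biUnion_finset (pairwiseDisjoint_cylinder_extendWord n _)
    fun w _ => measurableSet_cylinder n _]
  exact measureReal_mono (Set.iUnion₂_subset hs)

end Cylinders

section Conditioning

variable {A : Type*} [MeasurableSpace A] {d : ℕ}

def IsQuasiIndependent (μ : Measure (ℕ → A)) (K : ℝ) : Prop :=
  ∀ n : ℕ, 1 ≤ n → ∀ w : ℕ → A, ∀ n' : ℕ, ∀ w' : ℕ → A,
    μ (cylinder n w ∩ shift^[n] ⁻¹' cylinder n' w')
      ≤ ENNReal.ofReal K * μ (cylinder n w) * μ (cylinder n' w')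

def HasBoundedDistortion (τ : (ℕ → A) → EuclideanSpace ℝ (Fin d)) (R : ℝ) : Prop :=
  ∀ N : ℕ, 1 ≤ N → ∀ w : ℕ → A, ∀ ω ∈ cylinder N w, ∀ ω' ∈ cylinder N w,
    ‖birkhoffShift τ N ω - birkhoffShift τ N ω'‖ ≤ R

variable {μ : Measure (ℕ → A)} [IsFiniteMeasure μ] {K R : ℝ}
  {τ : (ℕ → A) → EuclideanSpace ℝ (Fin d)}

theorem IsQuasiIndependent.measureReal_le (hQ : IsQuasiIndependent μ K) (hK : 0 ≤ K) {n : ℕ}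
    (hn : 1 ≤ n) (w : ℕ → A) (n' : ℕ) (w' : ℕ → A) :
    μ.real (cylinder n w ∩ shift^[n] ⁻¹' cylinder n' w')
      ≤ K * μ.real (cylinder n w) * μ.real (cylinder n' w') := by
  simpa only [measureReal_def, ENNReal.toReal_mul, ENNReal.toReal_ofReal hK] using
    ENNReal.toReal_mono (by finiteness) (hQ n hn w n' w')

variable [Nonempty A] [Fintype A] [MeasurableSingletonClass A]

/-- Cover the event by the length-`m` cylinders meeting it; by bounded distortion these lie in
the `R`-thickening. -/
theorem IsQuasiIndependent.measureReal_inter_preimage_le (hQ : IsQuasiIndependent μ K)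
    (hK : 0 ≤ K) (hD : HasBoundedDistortion τ R) {n m : ℕ} (hn : 1 ≤ n) (hm : 1 ≤ m)
    (w : ℕ → A) (S : Set (EuclideanSpace ℝ (Fin d))) :
    μ.real (cylinder n w ∩ shift^[n] ⁻¹' (birkhoffShift τ m ⁻¹' S))
      ≤ K * μ.real (cylinder n w) * μ.real (birkhoffShift τ m ⁻¹' cthickening R S) := by
  classical
  set V := Finset.univ.filter fun v : Fin m → A =>
    (cylinder m (extendWord v) ∩ birkhoffShift τ m ⁻¹' S).Nonempty
  have hcover : cylinder n w ∩ shift^[n] ⁻¹' (birkhoffShift τ m ⁻¹' S)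
      ⊆ ⋃ v ∈ V, cylinder n w ∩ shift^[n] ⁻¹' cylinder m (extendWord v) := by
    rintro ω ⟨hω, hωS⟩
    exact Set.mem_biUnion (Finset.mem_filter.2 ⟨Finset.mem_univ _,
      _, mem_cylinder_extendWord m _, hωS⟩) ⟨hω, mem_cylinder_extendWord m _⟩
  have hthick : ∀ v ∈ V, cylinder m (extendWord v) ⊆ birkhoffShift τ m ⁻¹' cthickening R S := by
    intro v hv ω hω
    obtain ⟨ω₀, hω₀, hω₀S⟩ := (Finset.mem_filter.1 hv).2
    exact mem_cthickening_of_dist_le _ _ R S hω₀S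
      (by rw [dist_eq_norm]; exact hD m hm _ ω hω ω₀ hω₀)
  calc μ.real (cylinder n w ∩ shift^[n] ⁻¹' (birkhoffShift τ m ⁻¹' S))
      ≤ ∑ v ∈ V, μ.real (cylinder n w ∩ shift^[n] ⁻¹' cylinder m (extendWord v)) :=
        (measureReal_mono hcover (measure_ne_top μ _)).trans (measureReal_biUnion_finset_le _ _)
    _ ≤ ∑ v ∈ V, K * μ.real (cylinder n w) * μ.real (cylinder m (extendWord v)) :=
        Finset.sum_le_sum fun v _ => hQ.measureReal_le hK hn w m _
    _ = K * μ.real (cylinder n w) * ∑ v ∈ V, μ.real (cylinder m (extendWord v)) := by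
        rw [Finset.mul_sum]
    _ ≤ K * μ.real (cylinder n w) * μ.real (birkhoffShift τ m ⁻¹' cthickening R S) := by
        gcongr
        exact sum_measureReal_cylinder_le μ hthick

theorem IsQuasiIndependent.measureReal_preimage_closedBall_le (hQ : IsQuasiIndependent μ K)
    (hK : 0 ≤ K) (hD : HasBoundedDistortion τ R) (hR : 0 ≤ R) {n m : ℕ} (hn : 1 ≤ n)
    (hm : 1 ≤ m) (z : EuclideanSpace ℝ (Fin d)) {r : ℝ} (hr : 0 ≤ r) :
    μ.real (birkhoffShift τ (n + m) ⁻¹' closedBall z r)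
      ≤ ∑ w : Fin n → A, K * μ.real (cylinder n (extendWord w)) *
        μ.real (birkhoffShift τ m ⁻¹'
          closedBall (z - birkhoffShift τ n (extendWord w)) (r + 2 * R)) := by
  refine (measureReal_le_sum_inter_cylinder μ n _).trans (Finset.sum_le_sum fun w _ => ?_)
  set v := birkhoffShift τ n (extendWord w)
  have hsub : birkhoffShift τ (n + m) ⁻¹' closedBall z r ∩ cylinder n (extendWord w)
      ⊆ cylinder n (extendWord w) ∩
        shift^[n] ⁻¹' (birkhoffShift τ m ⁻¹' closedBall (z - v) (r + R)) := by
    rintro ω ⟨hωz, hωw⟩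
    refine ⟨hωw, ?_⟩
    have hv : ‖birkhoffShift τ n ω - v‖ ≤ R := hD n hn _ ω hωw _ (self_mem_cylinder n _)
    rw [Set.mem_preimage, mem_closedBall_iff_norm, birkhoffShift_add] at hωz
    rw [Set.mem_preimage, Set.mem_preimage, mem_closedBall_iff_norm]
    calc ‖birkhoffShift τ m (shift^[n] ω) - (z - v)‖
        = ‖(birkhoffShift τ n ω + birkhoffShift τ m (shift^[n] ω) - z)
            - (birkhoffShift τ n ω - v)‖ := by congr 1; abel
      _ ≤ r + R := (norm_sub_le _ _).trans (add_le_add hωz hv)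
  refine (measureReal_mono hsub).trans ((hQ.measureReal_inter_preimage_le hK hD hn hm _ _).trans ?_)
  rw [cthickening_closedBall hR (by positivity), show R + (r + R) = r + 2 * R by ring]

end Conditioning

theorem sum_mul_le_sum_filter_mul_add_sum_filter_not_mul {ι : Type*} (s : Finset ι)
    (P : ι → Prop) [DecidablePred P] {p q : ι → ℝ} {a b : ℝ} (hp : ∀ i ∈ s, 0 ≤ p i)
    (ha : ∀ i ∈ s, q i ≤ a) (hb : ∀ i ∈ s, ¬ P i → q i ≤ b) :
    ∑ i ∈ s, p i * q i ≤ (∑ i ∈ s with P i, p i) * a + (∑ i ∈ s with ¬ P i, p i) * b := by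
  rw [← Finset.sum_filter_add_sum_filter_not s P, Finset.sum_mul, Finset.sum_mul]
  refine add_le_add (Finset.sum_le_sum fun i hi => ?_) (Finset.sum_le_sum fun i hi => ?_) <;>
    obtain ⟨his, hPi⟩ := Finset.mem_filter.1 hi
  · exact mul_le_mul_of_nonneg_left (ha i his) (hp i his)
  · exact mul_le_mul_of_nonneg_left (hb i his hPi) (hp i his)

section FirstBlock

variable {A : Type*} [Nonempty A] [Fintype A] [MeasurableSpace A] [MeasurableSingletonClass A]
  {μ : Measure (ℕ → A)} [IsProbabilityMeasure μ] {d : ℕ} {τ : (ℕ → A) → EuclideanSpace ℝ (Fin d)}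
  {K R : ℝ}

/-- Condition on the first `n` symbols: on a cylinder `[w]` the first block is within `R` of its
value `v_w` at `extendWord w`, so the second block lies in a ball around `z - v_w`, covered by `cubeCount` unit cubes.
The cylinders with `|v_w| > s` have total mass at most `μ(|τ_n| > s - R)` and their cubes are
bounded by `a`; for the other cylinders the cubes are far from the origin and bounded by `b`. -/
theorem IsQuasiIndependent.measureReal_preimage_unitCubeAt_le (hQ : IsQuasiIndependent μ K)
    (hK : 0 ≤ K) (hD : HasBoundedDistortion τ R) (hR : 0 ≤ R) {n m : ℕ} (hn : 1 ≤ n)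
    (hm : 1 ≤ m) (z : EuclideanSpace ℝ (Fin d)) {s a b : ℝ}
    (ha : ∀ y, μ.real (birkhoffShift τ m ⁻¹' unitCubeAt y) ≤ a) (hb₀ : 0 ≤ b)
    (hb : ∀ y, ‖z‖ - s - √d * (√d / 2 + 2 * R + 1) ≤ ‖y‖ →
      μ.real (birkhoffShift τ m ⁻¹' unitCubeAt y) ≤ b) :
    μ.real (birkhoffShift τ (n + m) ⁻¹' unitCubeAt z)
      ≤ K * cubeCount d (√d / 2 + 2 * R) *
        (μ.real {ω | s - R < ‖birkhoffShift τ n ω‖} * a + b) := by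
  classical
  set ρ := √d / 2 + 2 * R
  set Γ : ℝ := (cubeCount d ρ : ℝ)
  set v : (Fin n → A) → EuclideanSpace ℝ (Fin d) := fun w => birkhoffShift τ n (extendWord w)
  set p : (Fin n → A) → ℝ := fun w => μ.real (cylinder n (extendWord w))
  set q : (Fin n → A) → ℝ := fun w => μ.real (birkhoffShift τ m ⁻¹' closedBall (z - v w) ρ)
  have hρ : 0 ≤ ρ := by positivity
  have ha₀ : 0 ≤ a := measureReal_nonneg.trans (ha 0)
  have hqa : ∀ w, q w ≤ Γ * a := fun w =>
    measureReal_preimage_closedBall_le_cubeCount_mul μ _ _ hρ fun y _ => ha y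
  have hqb : ∀ w, ¬ s < ‖v w‖ → q w ≤ Γ * b := fun w hw =>
    measureReal_preimage_closedBall_le_cubeCount_mul μ _ _ hρ fun y hy => hb y <| by
      have h₁ := norm_sub_norm_le z (v w)
      have h₂ : ‖z - v w‖ - ‖y‖ ≤ ‖y - (z - v w)‖ :=
        (norm_sub_norm_le _ _).trans_eq (norm_sub_rev _ _)
      linarith [not_lt.1 hw]
  have hfar : ∑ w with s < ‖v w‖, p w ≤ μ.real {ω | s - R < ‖birkhoffShift τ n ω‖} :=
    sum_measureReal_cylinder_le μ fun w hw ω hω => by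
      have h₁ := hD n hn _ _ (self_mem_cylinder n _) ω hω
      have h₂ := norm_sub_norm_le (v w) (birkhoffShift τ n ω)
      have h₃ := (Finset.mem_filter.1 hw).2
      show s - R < ‖birkhoffShift τ n ω‖
      linarith
  have hnear : ∑ w with ¬ s < ‖v w‖, p w ≤ 1 :=
    (sum_measureReal_cylinder_le μ fun _ _ => Set.subset_univ _).trans_eq probReal_univ
  calc μ.real (birkhoffShift τ (n + m) ⁻¹' unitCubeAt z)
      ≤ μ.real (birkhoffShift τ (n + m) ⁻¹' closedBall z (√d / 2)) :=
        measureReal_mono (Set.preimage_mono (unitCubeAt_subset_closedBall z))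
    _ ≤ ∑ w, K * p w * q w :=
        hQ.measureReal_preimage_closedBall_le hK hD hR hn hm z (by positivity)
    _ = K * ∑ w, p w * q w := by simp_rw [Finset.mul_sum, mul_assoc]
    _ ≤ K * ((∑ w with s < ‖v w‖, p w) * (Γ * a) + (∑ w with ¬ s < ‖v w‖, p w) * (Γ * b)) := by
        gcongr
        exact sum_mul_le_sum_filter_mul_add_sum_filter_not_mul _ _
          (fun _ _ => measureReal_nonneg) (fun w _ => hqa w) (fun w _ => hqb w)
    _ ≤ K * (μ.real {ω | s - R < ‖birkhoffShift τ n ω‖} * (Γ * a) + 1 * (Γ * b)) := by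
        gcongr
    _ = K * Γ * (μ.real {ω | s - R < ‖birkhoffShift τ n ω‖} * a + b) := by ring

end FirstBlock

theorem rpow_neg_le_two_rpow_mul_rpow_neg {x y t : ℝ} (hy : 0 < y) (hyx : y ≤ 2 * x)
    (ht : 0 ≤ t) : x ^ (-t) ≤ 2 ^ t * y ^ (-t) := by
  have h : 2 ^ t * y ^ (-t) = (y / 2) ^ (-t) := by
    rw [Real.div_rpow hy.le zero_le_two, Real.rpow_neg zero_le_two, div_inv_eq_mul, mul_comm]
  rw [h]
  exact Real.rpow_le_rpow_of_nonpos (by positivity) (by linarith) (by linarith)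

theorem one_le_exp_mul_exp_neg_mul_div {c T x N : ℝ} (hc : 0 ≤ c) (hN : 0 < N)
    (hx : x ≤ T * N) : 1 ≤ Real.exp (c * T) * Real.exp (-c * x / N) := by
  rw [← Real.exp_add]
  refine Real.one_le_exp ?_
  have : c * x / N ≤ c * T := by
    rw [div_le_iff₀ hN, mul_assoc]
    exact mul_le_mul_of_nonneg_left hx hc
  rw [neg_mul, neg_div]
  linarith

theorem mul_exp_neg_le_one {G c T : ℝ} (hG : 0 < G) (hc : 0 < c) (hT : 5 * Real.log G / c ≤ T) :
    G * Real.exp (-c * T / 5) ≤ 1 := by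
  have h : 5 * Real.log G ≤ T * c := (div_le_iff₀ hc).1 hT
  calc G * Real.exp (-c * T / 5) ≤ G * Real.exp (-Real.log G) := by gcongr; linarith
    _ = 1 := by rw [Real.exp_neg, Real.exp_log hG, mul_inv_cancel₀ hG.ne']

/-- The gain of the induction: `0.81 · 3/2 ≥ 6/5`. -/
theorem exp_neg_mul_sq_div_le {c x y T m N : ℝ} (hc : 0 ≤ c) (hm : 0 < m) (hmN : 3 * m ≤ 2 * N)
    (hx : 0 ≤ x) (hxy : 9 / 10 * x ≤ y) (hTx : T * N ≤ x ^ 2) :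
    Real.exp (-c * y ^ 2 / m) ≤ Real.exp (-c * x ^ 2 / N) * Real.exp (-c * T / 5) := by
  have hN : 0 < N := by linarith
  have hT : T ≤ x ^ 2 / N := (le_div_iff₀ hN).2 hTx
  have hy : 81 / 100 * x ^ 2 ≤ y ^ 2 := by nlinarith
  have hxy' : 6 / 5 * (x ^ 2 / N) ≤ y ^ 2 / m := by
    rw [mul_div_assoc', div_le_div_iff₀ hN hm]
    nlinarith [sq_nonneg x]
  rw [← Real.exp_add]
  refine Real.exp_le_exp.2 ?_
  calc -c * y ^ 2 / m = -(c * (y ^ 2 / m)) := by ring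
    _ ≤ -(c * (x ^ 2 / N + T / 5)) := by gcongr; linarith
    _ = -c * x ^ 2 / N + -c * T / 5 := by ring

section Tails

variable {A : Type*} [MeasurableSpace A] {μ : Measure (ℕ → A)} {d : ℕ}
  {τ : (ℕ → A) → EuclideanSpace ℝ (Fin d)}

def HasSubgaussianTails (μ : Measure (ℕ → A)) (τ : (ℕ → A) → EuclideanSpace ℝ (Fin d))
    (C c : ℝ) : Prop :=
  ∀ N : ℕ, 1 ≤ N → ∀ L : ℝ, 0 < L →
    μ.real {ω | L < ‖birkhoffShift τ N ω‖} ≤ C * Real.exp (-c * L ^ 2 / N)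

def HasAnticoncentration (μ : Measure (ℕ → A)) (τ : (ℕ → A) → EuclideanSpace ℝ (Fin d))
    (C : ℝ) : Prop :=
  ∀ N : ℕ, 1 ≤ N → ∀ z, μ.real (birkhoffShift τ N ⁻¹' unitCubeAt z) ≤ C * (N : ℝ) ^ (-(d : ℝ) / 2)

variable {C₂ c₂ c : ℝ}

theorem HasAnticoncentration.measureReal_preimage_unitCubeAt_le_of_sq_le
    (hanti : HasAnticoncentration μ τ C₂) (hC₂ : 0 ≤ C₂) (hc : 0 ≤ c) {T C₃ : ℝ}
    (hC₃ : C₂ * Real.exp (c * T) ≤ C₃) {N : ℕ} (hN : 1 ≤ N) {z : EuclideanSpace ℝ (Fin d)}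
    (hz : ‖z‖ ^ 2 ≤ T * N) :
    μ.real (birkhoffShift τ N ⁻¹' unitCubeAt z)
      ≤ C₃ * (N : ℝ) ^ (-(d : ℝ) / 2) * Real.exp (-c * ‖z‖ ^ 2 / N) := by
  have hN' : (0 : ℝ) < N := by exact_mod_cast hN
  calc μ.real (birkhoffShift τ N ⁻¹' unitCubeAt z) ≤ C₂ * (N : ℝ) ^ (-(d : ℝ) / 2) :=
        hanti N hN z
    _ ≤ C₂ * (N : ℝ) ^ (-(d : ℝ) / 2) * (Real.exp (c * T) * Real.exp (-c * ‖z‖ ^ 2 / N)) :=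
        le_mul_of_one_le_right (by positivity) (one_le_exp_mul_exp_neg_mul_div hc hN' hz)
    _ = C₂ * Real.exp (c * T) * (N : ℝ) ^ (-(d : ℝ) / 2) * Real.exp (-c * ‖z‖ ^ 2 / N) := by
        ring
    _ ≤ C₃ * (N : ℝ) ^ (-(d : ℝ) / 2) * Real.exp (-c * ‖z‖ ^ 2 / N) := by gcongr

variable [IsFiniteMeasure μ]

theorem HasSubgaussianTails.measureReal_le_of_subset (hLD : HasSubgaussianTails μ τ C₂ c₂)
    (hC₂ : 0 ≤ C₂) (hc₀ : 0 ≤ c) (hc : 1600 * c ≤ c₂) {n N : ℕ} (hn : 1 ≤ n) (hnN : n ≤ N)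
    {z : EuclideanSpace ℝ (Fin d)} (hz : 0 < ‖z‖) {s : Set (ℕ → A)}
    (hs : s ⊆ {ω | ‖z‖ / 40 < ‖birkhoffShift τ n ω‖}) :
    μ.real s ≤ C₂ * Real.exp (-c * ‖z‖ ^ 2 / N) := by
  refine (measureReal_mono hs).trans ((hLD n hn _ (by positivity)).trans ?_)
  have hn' : (0 : ℝ) < n := by exact_mod_cast hn
  have h : c * ‖z‖ ^ 2 / N ≤ c₂ * (‖z‖ / 40) ^ 2 / n :=
    calc c * ‖z‖ ^ 2 / N ≤ c * ‖z‖ ^ 2 / n := by gcongr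
      _ ≤ c₂ * (‖z‖ / 40) ^ 2 / n :=
        div_le_div_of_nonneg_right (by nlinarith [sq_nonneg ‖z‖]) hn'.le
  refine mul_le_mul_of_nonneg_left (Real.exp_le_exp.2 ?_) hC₂
  rw [neg_mul, neg_mul, neg_div, neg_div]
  exact neg_le_neg h

theorem HasSubgaussianTails.measureReal_preimage_unitCubeAt_le
    (hLD : HasSubgaussianTails μ τ C₂ c₂) (hC₂ : 0 ≤ C₂) (hc₀ : 0 ≤ c) (hc : 1600 * c ≤ c₂)
    {N : ℕ} (hN : 1 ≤ N) {z : EuclideanSpace ℝ (Fin d)} (hz : 0 < ‖z‖) (hdz : √d ≤ ‖z‖) :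
    μ.real (birkhoffShift τ N ⁻¹' unitCubeAt z) ≤ C₂ * Real.exp (-c * ‖z‖ ^ 2 / N) := by
  refine hLD.measureReal_le_of_subset hC₂ hc₀ hc hN le_rfl hz fun ω hω => ?_
  have h₁ := mem_closedBall_iff_norm.1 (unitCubeAt_subset_closedBall z hω)
  have h₂ : ‖z‖ - ‖birkhoffShift τ N ω‖ ≤ ‖birkhoffShift τ N ω - z‖ :=
    (norm_sub_norm_le _ _).trans_eq (norm_sub_rev _ _)
  show ‖z‖ / 40 < ‖birkhoffShift τ N ω‖
  linarith

end Tails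

section Induction

variable {A : Type*} [MeasurableSpace A] [Nonempty A] [Fintype A] [MeasurableSingletonClass A]
  {μ : Measure (ℕ → A)} [IsProbabilityMeasure μ] {d : ℕ}
  {τ : (ℕ → A) → EuclideanSpace ℝ (Fin d)} {K R C₂ c₂ c : ℝ}

/-- Split `N = ⌊N/2⌋ + ⌈N/2⌉`; `hG` and `hGC` make the contributions of the cylinders with
`|v_w| ≤ |z|/20` and `|v_w| > |z|/20` each at most half of the bound. -/
theorem IsQuasiIndependent.measureReal_preimage_unitCubeAt_le_of_two_le
    (hQ : IsQuasiIndependent μ K) (hK : 0 ≤ K) (hD : HasBoundedDistortion τ R) (hR : 0 ≤ R)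
    (hLD : HasSubgaussianTails μ τ C₂ c₂) (hanti : HasAnticoncentration μ τ C₂) (hC₂ : 0 ≤ C₂)
    (hc₀ : 0 ≤ c) (hc : 1600 * c ≤ c₂) {T C₃ : ℝ}
    (hG : 2 * K * cubeCount d (√d / 2 + 2 * R) * 2 ^ ((d : ℝ) / 2) * Real.exp (-c * T / 5) ≤ 1)
    (hGC : 2 * K * cubeCount d (√d / 2 + 2 * R) * 2 ^ ((d : ℝ) / 2) * C₂ ^ 2 ≤ C₃)
    {N : ℕ} (hN : 2 ≤ N)
    (IH : ∀ m < N, 1 ≤ m → ∀ y, μ.real (birkhoffShift τ m ⁻¹' unitCubeAt y)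
      ≤ C₃ * (m : ℝ) ^ (-(d : ℝ) / 2) * Real.exp (-c * ‖y‖ ^ 2 / m))
    {z : EuclideanSpace ℝ (Fin d)} (hz : 0 < ‖z‖) (hRz : 40 * R ≤ ‖z‖)
    (hρz : 20 * (√d * (√d / 2 + 2 * R + 1)) ≤ ‖z‖) (hTz : T * N ≤ ‖z‖ ^ 2) :
    μ.real (birkhoffShift τ N ⁻¹' unitCubeAt z)
      ≤ C₃ * (N : ℝ) ^ (-(d : ℝ) / 2) * Real.exp (-c * ‖z‖ ^ 2 / N) := by
  set Γ : ℝ := (cubeCount d (√d / 2 + 2 * R) : ℝ)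
  set X := (N : ℝ) ^ (-(d : ℝ) / 2)
  set E := Real.exp (-c * ‖z‖ ^ 2 / N)
  obtain ⟨n, m, rfl, hn, hm, hmN, hNm, hmN'⟩ : ∃ n m, n + m = N ∧ 1 ≤ n ∧ 1 ≤ m ∧ m < N ∧
      (N : ℝ) ≤ 2 * m ∧ 3 * (m : ℝ) ≤ 2 * N :=
    ⟨N / 2, N - N / 2, by omega, by omega, by omega, by omega,
      by exact_mod_cast (by omega : N ≤ 2 * (N - N / 2)),
      by exact_mod_cast (by omega : 3 * (N - N / 2) ≤ 2 * N)⟩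
  have hm' : (0 : ℝ) < m := by exact_mod_cast hm
  have hmX : (m : ℝ) ^ (-(d : ℝ) / 2) ≤ 2 ^ ((d : ℝ) / 2) * X := by
    show _ ≤ _ * ((n + m : ℕ) : ℝ) ^ (-(d : ℝ) / 2)
    rw [neg_div]
    exact rpow_neg_le_two_rpow_mul_rpow_neg (by positivity) hNm (by positivity)
  have hC₃ : 0 ≤ C₃ := le_trans (by positivity) hGC
  have hfar : μ.real {ω | ‖z‖ / 20 - R < ‖birkhoffShift τ n ω‖} ≤ C₂ * E :=
    hLD.measureReal_le_of_subset hC₂ hc₀ hc hn (by omega) hz fun ω hω => by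
      show ‖z‖ / 40 < _
      linarith [show ‖z‖ / 20 - R < _ from hω]
  have hsplit := hQ.measureReal_preimage_unitCubeAt_le hK hD hR hn hm z (s := ‖z‖ / 20)
    (a := C₂ * (2 ^ ((d : ℝ) / 2) * X))
    (b := C₃ * (2 ^ ((d : ℝ) / 2) * X) * (E * Real.exp (-c * T / 5)))
    (fun y => (hanti m hm y).trans (by gcongr)) (by positivity)
    (fun y hy => (IH m hmN hm y).trans <| by
      gcongr
      exact exp_neg_mul_sq_div_le hc₀ hm' hmN' hz.le (by linarith) hTz)
  calc μ.real (birkhoffShift τ (n + m) ⁻¹' unitCubeAt z)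
      ≤ K * Γ * (C₂ * E * (C₂ * (2 ^ ((d : ℝ) / 2) * X))
          + C₃ * (2 ^ ((d : ℝ) / 2) * X) * (E * Real.exp (-c * T / 5))) :=
        hsplit.trans (by gcongr)
    _ = (2 * K * Γ * 2 ^ ((d : ℝ) / 2) * C₂ ^ 2) / 2 * X * E
          + (2 * K * Γ * 2 ^ ((d : ℝ) / 2) * Real.exp (-c * T / 5)) * (C₃ / 2) * X * E := by
        ring
    _ ≤ C₃ / 2 * X * E + 1 * (C₃ / 2) * X * E := by gcongr
    _ = C₃ * X * E := by ring

theorem IsQuasiIndependent.measureReal_preimage_unitCubeAt_le_of_mul_lt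
    (hQ : IsQuasiIndependent μ K) (hK : 0 ≤ K) (hD : HasBoundedDistortion τ R) (hR : 0 ≤ R)
    (hLD : HasSubgaussianTails μ τ C₂ c₂) (hanti : HasAnticoncentration μ τ C₂) (hC₂ : 0 ≤ C₂)
    (hc₀ : 0 ≤ c) (hc : 1600 * c ≤ c₂) {T C₃ : ℝ} (hTR : 1600 * R ^ 2 ≤ T)
    (hTρ : 400 * (√d * (√d / 2 + 2 * R + 1)) ^ 2 ≤ T)
    (hG : 2 * K * cubeCount d (√d / 2 + 2 * R) * 2 ^ ((d : ℝ) / 2) * Real.exp (-c * T / 5) ≤ 1)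
    (hGC : 2 * K * cubeCount d (√d / 2 + 2 * R) * 2 ^ ((d : ℝ) / 2) * C₂ ^ 2 ≤ C₃)
    (hC₂C₃ : C₂ ≤ C₃) {N : ℕ} (hN : 1 ≤ N)
    (IH : ∀ m < N, 1 ≤ m → ∀ y, μ.real (birkhoffShift τ m ⁻¹' unitCubeAt y)
      ≤ C₃ * (m : ℝ) ^ (-(d : ℝ) / 2) * Real.exp (-c * ‖y‖ ^ 2 / m))
    {z : EuclideanSpace ℝ (Fin d)} (hz : T * N < ‖z‖ ^ 2) :
    μ.real (birkhoffShift τ N ⁻¹' unitCubeAt z)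
      ≤ C₃ * (N : ℝ) ^ (-(d : ℝ) / 2) * Real.exp (-c * ‖z‖ ^ 2 / N) := by
  have hT : 0 ≤ T := le_trans (by positivity) hTR
  have hTz : T ≤ ‖z‖ ^ 2 := (le_mul_of_one_le_right hT (by exact_mod_cast hN)).trans hz.le
  have hz₀ : 0 < ‖z‖ := by nlinarith [norm_nonneg z]
  have hRz : 40 * R ≤ ‖z‖ := le_of_pow_le_pow_left₀ two_ne_zero hz₀.le (by nlinarith)
  have hρz : 20 * (√d * (√d / 2 + 2 * R + 1)) ≤ ‖z‖ :=
    le_of_pow_le_pow_left₀ two_ne_zero hz₀.le (by nlinarith)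
  obtain rfl | hN₂ : N = 1 ∨ 2 ≤ N := by omega
  · have hdz : √d ≤ ‖z‖ := by nlinarith [Real.sqrt_nonneg d]
    calc μ.real (birkhoffShift τ 1 ⁻¹' unitCubeAt z)
        ≤ C₂ * Real.exp (-c * ‖z‖ ^ 2 / (1 : ℕ)) :=
          hLD.measureReal_preimage_unitCubeAt_le hC₂ hc₀ hc le_rfl hz₀ hdz
      _ ≤ C₃ * ((1 : ℕ) : ℝ) ^ (-(d : ℝ) / 2) * Real.exp (-c * ‖z‖ ^ 2 / (1 : ℕ)) := by
          rw [Nat.cast_one, Real.one_rpow, mul_one]; gcongr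
  · exact hQ.measureReal_preimage_unitCubeAt_le_of_two_le hK hD hR hLD hanti hC₂ hc₀ hc hG hGC
      hN₂ IH hz₀ hRz hρz hz.le

end Induction

theorem stmt_18_general
    {A : Type*} [Fintype A] [MeasurableSpace A] [DiscreteMeasurableSpace A]
    (μ : Measure (ℕ → A)) [IsProbabilityMeasure μ]
    {d : ℕ}
    (τ : (ℕ → A) → EuclideanSpace ℝ (Fin d))
    (K : ℝ) (hK : 1 ≤ K)
    -- Gibbs / quasi-independence property
    (hGibbs : ∀ n : ℕ, 1 ≤ n → ∀ w : ℕ → A, ∀ n' : ℕ, ∀ w' : ℕ → A,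
      μ (cylinder n w ∩ shift^[n] ⁻¹' cylinder n' w')
        ≤ ENNReal.ofReal K * μ (cylinder n w) * μ (cylinder n' w'))
    (R : ℝ) (hR : 0 < R)
    -- bounded distortion: τ_N has diameter ≤ R on length-N cylinders
    (hdist : ∀ N : ℕ, 1 ≤ N → ∀ w : ℕ → A, ∀ ω ∈ cylinder N w, ∀ ω' ∈ cylinder N w,
      ‖birkhoffShift τ N ω - birkhoffShift τ N ω'‖ ≤ R)
    (C₂ c₂ : ℝ) (hC₂ : 0 < C₂) (hc₂ : 0 < c₂)
    -- large deviations
    (hLD : ∀ N : ℕ, 1 ≤ N → ∀ L : ℝ, 0 < L →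
      (μ {ω | L < ‖birkhoffShift τ N ω‖}).toReal ≤ C₂ * Real.exp (-c₂ * L ^ 2 / N))
    -- anticoncentration
    (hanti : ∀ N : ℕ, 1 ≤ N → ∀ a : EuclideanSpace ℝ (Fin d),
      (μ {ω | birkhoffShift τ N ω ∈ unitCubeCorner a}).toReal
        ≤ C₂ * (N : ℝ) ^ (-(d : ℝ) / 2)) :
    ∃ C₃ : ℝ, 0 < C₃ ∧ ∃ c₃ : ℝ, 0 < c₃ ∧
      ∀ N : ℕ, 1 ≤ N → ∀ z : EuclideanSpace ℝ (Fin d),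
        (μ {ω | birkhoffShift τ N ω ∈ unitCubeAt z}).toReal
          ≤ C₃ * (N : ℝ) ^ (-(d : ℝ) / 2) * Real.exp (-c₃ * ‖z‖ ^ 2 / N) := by
  have : Nonempty A := ⟨(nonempty_of_isProbabilityMeasure μ).some 0⟩
  have hQ : IsQuasiIndependent μ K := hGibbs
  have hanti' : HasAnticoncentration μ τ C₂ := fun N hN z => by
    rw [unitCubeAt_eq_unitCubeCorner]
    exact hanti N hN _
  set ρ := √d / 2 + 2 * R
  set G := 2 * K * cubeCount d ρ * 2 ^ ((d : ℝ) / 2)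
  set c := c₂ / 1600
  have hc : 0 < c := by positivity
  have hG : 0 < G := by have := cubeCount_pos d ρ; positivity
  set T := max (max (1600 * R ^ 2) (400 * (√d * (ρ + 1)) ^ 2)) (5 * Real.log G / c)
  have hTR : 1600 * R ^ 2 ≤ T := (le_max_left _ _).trans (le_max_left _ _)
  have hTρ : 400 * (√d * (ρ + 1)) ^ 2 ≤ T := (le_max_right _ _).trans (le_max_left _ _)
  have hT : 0 ≤ c * T := mul_nonneg hc.le ((by positivity : (0 : ℝ) ≤ 1600 * R ^ 2).trans hTR)
  set C₃ := max (C₂ * Real.exp (c * T)) (G * C₂ ^ 2)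
  have hC₂C₃ : C₂ ≤ C₃ :=
    (le_mul_of_one_le_right hC₂.le (Real.one_le_exp hT)).trans (le_max_left _ _)
  refine ⟨C₃, hC₂.trans_le hC₂C₃, c, hc, fun N => ?_⟩
  induction N using Nat.strong_induction_on with
  | _ N IH =>
  intro hN z
  rcases le_or_gt (‖z‖ ^ 2) (T * N) with hz | hz
  · exact hanti'.measureReal_preimage_unitCubeAt_le_of_sq_le hC₂.le hc.le (le_max_left _ _) hN hz
  · exact hQ.measureReal_preimage_unitCubeAt_le_of_mul_lt (by linarith) hdist hR.le hLD hanti'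
      hC₂.le hc.le (show 1600 * (c₂ / 1600) ≤ c₂ by linarith) hTR hTρ
      (mul_exp_neg_le_one hG hc (le_max_right _ _)) (le_max_right _ _) hC₂C₃ hN IH hz

/-- Lemma A.3 of the paper: for a shift-invariant measure on a subshift with the Gibbs
(quasi-independence) property and a cocycle with bounded distortion on cylinders,
subgaussian large deviations and `N^{-d/2}` anticoncentration imply the anticoncentration
large deviation bound `μ(τ_N ∈ 𝒬) ≤ C₃ N^{-d/2} e^{-c₃|z|²/N}` for unit cubes centered
at `z`. -/
theorem stmt_18
    {A : Type*} [Fintype A] [MeasurableSpace A] [DiscreteMeasurableSpace A]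
    (μ : Measure (ℕ → A)) [IsProbabilityMeasure μ]
    (hshift : MeasurePreserving (shift : (ℕ → A) → ℕ → A) μ μ)
    {d : ℕ}
    (τ : (ℕ → A) → EuclideanSpace ℝ (Fin d)) (hτm : Measurable τ)
    (hτb : ∃ M, ∀ ω, ‖τ ω‖ ≤ M)
    (K : ℝ) (hK : 1 ≤ K)
    -- Gibbs / quasi-independence property
    (hGibbs : ∀ n : ℕ, 1 ≤ n → ∀ w : ℕ → A, ∀ n' : ℕ, ∀ w' : ℕ → A,
      μ (cylinder n w ∩ shift^[n] ⁻¹' cylinder n' w')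
        ≤ ENNReal.ofReal K * μ (cylinder n w) * μ (cylinder n' w'))
    (R : ℝ) (hR : 0 < R)
    -- bounded distortion: τ_N has diameter ≤ R on length-N cylinders
    (hdist : ∀ N : ℕ, 1 ≤ N → ∀ w : ℕ → A, ∀ ω ∈ cylinder N w, ∀ ω' ∈ cylinder N w,
      ‖birkhoffShift τ N ω - birkhoffShift τ N ω'‖ ≤ R)
    (C₂ c₂ : ℝ) (hC₂ : 0 < C₂) (hc₂ : 0 < c₂)
    -- large deviations
    (hLD : ∀ N : ℕ, 1 ≤ N → ∀ L : ℝ, 0 < L →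
      (μ {ω | L < ‖birkhoffShift τ N ω‖}).toReal ≤ C₂ * Real.exp (-c₂ * L ^ 2 / N))
    -- anticoncentration
    (hanti : ∀ N : ℕ, 1 ≤ N → ∀ a : EuclideanSpace ℝ (Fin d),
      (μ {ω | birkhoffShift τ N ω ∈ unitCubeCorner a}).toReal
        ≤ C₂ * (N : ℝ) ^ (-(d : ℝ) / 2)) :
    ∃ C₃ : ℝ, 0 < C₃ ∧ ∃ c₃ : ℝ, 0 < c₃ ∧
      ∀ N : ℕ, 1 ≤ N → ∀ z : EuclideanSpace ℝ (Fin d),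
        (μ {ω | birkhoffShift τ N ω ∈ unitCubeAt z}).toReal
          ≤ C₃ * (N : ℝ) ^ (-(d : ℝ) / 2) * Real.exp (-c₃ * ‖z‖ ^ 2 / N) :=
  stmt_18_general μ τ K hK hGibbs R hR hdist C₂ c₂ hC₂ hc₂ hLD hanti
end
end
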